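/- arXiv:1910.05586 — 3 statements merged into one kernel-verified Lean document; each statement's English description precedes it below -/
import Mathlib

section
/- Let G = (V,E) be a finite simple graph and let A ∈ 𝒜_G be a generalized adjacency matrix of G. Then the function H(A,·) : ℝ₊^V → ℝ is a positive definite monotone gauge and, for every w ∈ ℝ₊^V, ‖w‖_∞ ≤ H(A,w) ≤ χ_f(G,w). -/
open scoped BigOperators Pointwise

variable {V : Type*} [Fintype V] [DecidableEq V]

/-- Inner product on `ℝ^V`. -/
def ip (w z : V → ℝ) : ℝ := ∑ i, w i * z i

/-- `κ` is a positive definite monotone gauge on the nonnegative orthant of `ℝ^V`. -/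
def IsPDMGauge (κ : (V → ℝ) → ℝ) : Prop :=
  κ 0 = 0 ∧
  (∀ w : V → ℝ, 0 ≤ w → 0 ≤ κ w) ∧
  (∀ (c : ℝ) (w : V → ℝ), 0 < c → 0 ≤ w → κ (c • w) = c * κ w) ∧
  (∀ w z : V → ℝ, 0 ≤ w → 0 ≤ z → κ (w + z) ≤ κ w + κ z) ∧
  (∀ w : V → ℝ, 0 ≤ w → w ≠ 0 → 0 < κ w) ∧
  (∀ w z : V → ℝ, 0 ≤ w → w ≤ z → κ w ≤ κ z)

/-- The dual gauge `κ∘(z) = sup{⟨w,z⟩ : w ≥ 0, κ(w) ≤ 1}`. -/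
noncomputable def dualGauge (κ : (V → ℝ) → ℝ) (z : V → ℝ) : ℝ :=
  sSup {r : ℝ | ∃ w : V → ℝ, 0 ≤ w ∧ κ w ≤ 1 ∧ r = ip w z}

/-- The antiblocker of a subset of the nonnegative orthant. -/
def abl (X : Set (V → ℝ)) : Set (V → ℝ) := {y | 0 ≤ y ∧ ∀ x ∈ X, ip x y ≤ 1}

/-- A convex corner: compact, convex, nonempty interior, subset of the nonnegative
orthant, and lower-comprehensive. -/
def IsConvexCorner (C : Set (V → ℝ)) : Prop :=
  IsCompact C ∧ Convex ℝ C ∧ (interior C).Nonempty ∧ (∀ x ∈ C, 0 ≤ x) ∧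
  ∀ x y : V → ℝ, 0 ≤ x → x ≤ y → y ∈ C → x ∈ C

/-- Minkowski functional of a set. -/
noncomputable def minkowski (C : Set (V → ℝ)) (x : V → ℝ) : ℝ :=
  sInf {μ : ℝ | 0 ≤ μ ∧ x ∈ μ • C}

/-- Support function of a set. -/
noncomputable def suppFn (C : Set (V → ℝ)) (y : V → ℝ) : ℝ :=
  sSup {r : ℝ | ∃ x ∈ C, r = ip x y}

/-- A stable (independent) set of vertices. -/
def IsStableSet (G : SimpleGraph V) (S : Finset V) : Prop :=
  ∀ i ∈ S, ∀ j ∈ S, ¬ G.Adj i j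

/-- Weighted stability number `α(G,w)`. -/
noncomputable def alphaW (G : SimpleGraph V) (w : V → ℝ) : ℝ :=
  sSup {r : ℝ | ∃ S : Finset V, IsStableSet G S ∧ r = ∑ i ∈ S, w i}

/-- Stability number `α(G)`. -/
noncomputable def stabilityNumber (G : SimpleGraph V) : ℕ :=
  sSup {n : ℕ | ∃ S : Finset V, IsStableSet G S ∧ S.card = n}

/-- Weighted fractional chromatic number `χ_f(G,w)`. -/
noncomputable def chiF (G : SimpleGraph V) (w : V → ℝ) : ℝ :=
  sInf {r : ℝ | ∃ y : Finset V → ℝ,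
    (∀ S, 0 ≤ y S) ∧ (∀ S, ¬ IsStableSet G S → y S = 0) ∧
    (∀ i, w i ≤ ∑ S : Finset V, (if i ∈ S then y S else 0)) ∧
    r = ∑ S : Finset V, y S}

/-- The stable set polytope `STAB(G)`. -/
def STABset (G : SimpleGraph V) : Set (V → ℝ) :=
  convexHull ℝ {x : V → ℝ | ∃ S : Finset V, IsStableSet G S ∧
    x = fun i => if i ∈ S then (1 : ℝ) else 0}

/-- The fractional stable set polytope `QSTAB(G)`. -/
def QSTABset (H : SimpleGraph V) : Set (V → ℝ) :=
  {x | 0 ≤ x ∧ ∀ K : Finset V, H.IsClique (↑K : Set V) → ∑ i ∈ K, x i ≤ 1}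

/-- The set of (real) eigenvalues of a matrix. -/
def spectrumSet (M : Matrix V V ℝ) : Set ℝ :=
  {t | ∃ x : V → ℝ, x ≠ 0 ∧ M.mulVec x = t • x}

/-- Largest eigenvalue. -/
noncomputable def lambdaMax (M : Matrix V V ℝ) : ℝ := sSup (spectrumSet M)

/-- Smallest eigenvalue. -/
noncomputable def lambdaMin (M : Matrix V V ℝ) : ℝ := sInf (spectrumSet M)

/-- Positive semidefinite square root (zero on non-PSD matrices). -/
noncomputable def psdSqrt (M : Matrix V V ℝ) : Matrix V V ℝ :=
  letI := Classical.dec M.PosSemidef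
  if h : M.PosSemidef then
    (h.1.eigenvectorUnitary : Matrix V V ℝ) * Matrix.diagonal (Real.sqrt ∘ h.1.eigenvalues) *
      (star h.1.eigenvectorUnitary : Matrix V V ℝ)
  else 0

/-- `Â = A / (-λ_min(A))` for nonzero `A`, and `0̂ = 0`. -/
noncomputable def hatM (A : Matrix V V ℝ) : Matrix V V ℝ :=
  if A = 0 then 0 else (-(lambdaMin A))⁻¹ • A

/-- `A` is a generalized adjacency matrix of `G`: symmetric, with `A i j = 0`
whenever `i` and `j` are non-adjacent (in particular on the diagonal). -/
def IsGenAdj (G : SimpleGraph V) (A : Matrix V V ℝ) : Prop :=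
  A.IsSymm ∧ ∀ i j, ¬ G.Adj i j → A i j = 0

/-- Weighted Hoffman bound `H(A,w) = λ_max(W^{1/2}(I+Â)W^{1/2})`, `W = Diag w`. -/
noncomputable def hoffman (A : Matrix V V ℝ) (w : V → ℝ) : ℝ :=
  lambdaMax (psdSqrt (Matrix.diagonal w) * (1 + hatM A) * psdSqrt (Matrix.diagonal w))

/-- The feasible region `𝒰_A` of the SDP defining `Υ(A,·)`. -/
def Uset (A : Matrix V V ℝ) : Set (V → ℝ) :=
  {x | 0 ≤ x ∧ ((1 : Matrix V V ℝ) -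
    psdSqrt (1 + hatM A) * Matrix.diagonal x * psdSqrt (1 + hatM A)).PosSemidef}

/-- `Υ(A,w) = max{⟨w,x⟩ : x ≥ 0, (I+Â)^{1/2} Diag(x) (I+Â)^{1/2} ⪯ I}`. -/
noncomputable def upsilon (A : Matrix V V ℝ) (w : V → ℝ) : ℝ :=
  sSup {r : ℝ | ∃ x ∈ Uset A, r = ip w x}

/-- The diagonal of a matrix, as a vector. -/
def diagVec (M : Matrix V V ℝ) : V → ℝ := fun i => M i i

/-- The convex corner `ℋ_A`. -/
def Hset (A : Matrix V V ℝ) : Set (V → ℝ) :=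
  {x | 0 ≤ x ∧ ∃ Y : Matrix V V ℝ, Y.PosSemidef ∧ Y.trace ≤ 1 ∧
    ∀ i, x i ≤ diagVec (psdSqrt (1 + hatM A) * Y * psdSqrt (1 + hatM A)) i}

/-- Objective function of Luz's convex quadratic program:
`2⟨w,x⟩ − ⟨x, W^{1/2}(I+Â)W^{1/2} x⟩`. -/
noncomputable def luzObj (A : Matrix V V ℝ) (w x : V → ℝ) : ℝ :=
  2 * ip w x - ∑ i, x i *
    ((psdSqrt (Matrix.diagonal w) * (1 + hatM A) * psdSqrt (Matrix.diagonal w)).mulVec x) i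

/-- Luz's bound `ℓ(A,w)` as a real number (supremum of the CQP objective). -/
noncomputable def luz (A : Matrix V V ℝ) (w : V → ℝ) : ℝ :=
  sSup {r : ℝ | ∃ x : V → ℝ, 0 ≤ x ∧ r = luzObj A w x}

/-- Luz's bound `ℓ(A,w)` with values in `ℝ ∪ {±∞}`. -/
noncomputable def luzE (A : Matrix V V ℝ) (w : V → ℝ) : EReal :=
  sSup {r : EReal | ∃ x : V → ℝ, 0 ≤ x ∧ r = ((luzObj A w x : ℝ) : EReal)}

/-- The theta body `TH(G)`. -/
def THbody (G : SimpleGraph V) : Set (V → ℝ) :=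
  {x | 0 ≤ x ∧ ∃ X : Matrix V V ℝ, X.PosSemidef ∧ (∀ i, X i i = x i) ∧
    (∀ i j, G.Adj i j → X i j = 0) ∧
    (Matrix.fromBlocks (1 : Matrix Unit Unit ℝ) (Matrix.of fun _ j => x j)
      (Matrix.of fun i _ => x i) X).PosSemidef}

/-- Weighted Lovász theta number `θ(G,w)`. -/
noncomputable def thetaW (G : SimpleGraph V) (w : V → ℝ) : ℝ :=
  sSup {r : ℝ | ∃ x ∈ THbody G, r = ip w x}

noncomputable def Matrix.PosSemidef.sqrt {M : Matrix V V ℝ} (h : M.PosSemidef) : Matrix V V ℝ :=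
  (h.1.eigenvectorUnitary : Matrix V V ℝ) * Matrix.diagonal (Real.sqrt ∘ h.1.eigenvalues) *
    (star h.1.eigenvectorUnitary : Matrix V V ℝ)

lemma Matrix.PosSemidef.posSemidef_sqrt {M : Matrix V V ℝ} (h : M.PosSemidef) :
    h.sqrt.PosSemidef :=
  (Matrix.PosSemidef.diagonal (fun i => Real.sqrt_nonneg (h.1.eigenvalues i))).mul_mul_conjTranspose_same _

lemma Matrix.PosSemidef.sqrt_mul_self {M : Matrix V V ℝ} (h : M.PosSemidef) :
    h.sqrt * h.sqrt = M := by
  have hUU : (star h.1.eigenvectorUnitary : Matrix V V ℝ) *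
      (h.1.eigenvectorUnitary : Matrix V V ℝ) = 1 :=
    Matrix.mem_unitaryGroup_iff'.mp h.1.eigenvectorUnitary.2
  have hd : Matrix.diagonal (Real.sqrt ∘ h.1.eigenvalues) *
      Matrix.diagonal (Real.sqrt ∘ h.1.eigenvalues) =
      Matrix.diagonal (RCLike.ofReal ∘ h.1.eigenvalues) := by
    rw [Matrix.diagonal_mul_diagonal]
    congr 1
    funext i
    simp [Real.mul_self_sqrt (h.eigenvalues_nonneg i)]
  conv_rhs => rw [h.1.spectral_theorem, Unitary.conjStarAlgAut_apply]
  rw [Matrix.PosSemidef.sqrt]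
  calc _ = (h.1.eigenvectorUnitary : Matrix V V ℝ) * Matrix.diagonal (Real.sqrt ∘ h.1.eigenvalues) *
      ((star h.1.eigenvectorUnitary : Matrix V V ℝ) * (h.1.eigenvectorUnitary : Matrix V V ℝ)) *
      Matrix.diagonal (Real.sqrt ∘ h.1.eigenvalues) *
      (star h.1.eigenvectorUnitary : Matrix V V ℝ) := by noncomm_ring
    _ = _ := by rw [hUU, Matrix.mul_one, ← hd]; noncomm_ring

lemma Matrix.PosSemidef.eq_sqrt_of_sq_eq {A B : Matrix V V ℝ} (hA : A.PosSemidef)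
    (hB : B.PosSemidef) (h : A ^ 2 = B) : A = hB.sqrt := by
  open scoped MatrixOrder in
  exact (CFC.sqrt_unique (a := B) (b := A) (by rw [← sq]; exact h)
    (Matrix.nonneg_iff_posSemidef.mpr hA)).symm.trans
    (CFC.sqrt_unique hB.sqrt_mul_self (Matrix.nonneg_iff_posSemidef.mpr hB.posSemidef_sqrt))

namespace HPAux
set_option linter.unusedSectionVars false
set_option linter.unusedVariables false
open Matrix

variable {V : Type*} [Fintype V] [DecidableEq V]


lemma dot_self_nonneg (x : V → ℝ) : 0 ≤ x ⬝ᵥ x :=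
  Finset.sum_nonneg fun i _ => mul_self_nonneg _

lemma dot_self_pos {x : V → ℝ} (hx : x ≠ 0) : 0 < x ⬝ᵥ x := by
  rcases Function.ne_iff.mp hx with ⟨i, hi⟩
  have h1 : 0 < x i * x i := mul_self_pos.mpr hi
  exact h1.trans_le (Finset.single_le_sum (fun j _ => mul_self_nonneg (x j)) (Finset.mem_univ i))

lemma isHermitian_of_isSymm {M : Matrix V V ℝ} (h : M.IsSymm) : M.IsHermitian := by
  ext i j
  simp only [conjTranspose_apply, star_trivial]
  exact (congrFun (congrFun h i) j)

lemma spectrum_le_of_psd {M : Matrix V V ℝ} {c : ℝ}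
    (h : (c • (1 : Matrix V V ℝ) - M).PosSemidef)
    {t : ℝ} (ht : t ∈ spectrumSet M) : t ≤ c := by
  obtain ⟨x, hx, hMx⟩ := ht
  have h2 := h.dotProduct_mulVec_nonneg x
  rw [sub_mulVec, smul_mulVec, one_mulVec, hMx, dotProduct_sub, dotProduct_smul,
    dotProduct_smul, star_trivial, smul_eq_mul, smul_eq_mul, sub_nonneg] at h2
  exact le_of_mul_le_mul_right (by linarith) (dot_self_pos hx)

lemma le_spectrum_of_psd {M : Matrix V V ℝ} {c : ℝ}
    (h : (M - c • (1 : Matrix V V ℝ)).PosSemidef)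
    {t : ℝ} (ht : t ∈ spectrumSet M) : c ≤ t := by
  obtain ⟨x, hx, hMx⟩ := ht
  have h2 := h.dotProduct_mulVec_nonneg x
  rw [sub_mulVec, smul_mulVec, one_mulVec, hMx, dotProduct_sub, dotProduct_smul,
    dotProduct_smul, star_trivial, smul_eq_mul, smul_eq_mul, sub_nonneg] at h2
  exact le_of_mul_le_mul_right (by linarith) (dot_self_pos hx)

lemma eig_mem {M : Matrix V V ℝ} (hM : M.IsHermitian) (i : V) :
    hM.eigenvalues i ∈ spectrumSet M :=
  ⟨hM.eigenvectorBasis i, (WithLp.ofLp_eq_zero 2).ne.2 <| hM.eigenvectorBasis.orthonormal.ne_zero i,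
    hM.mulVec_eigenvectorBasis i⟩

lemma conj_diag_psd {M : Matrix V V ℝ} (hM : M.IsHermitian) {d : V → ℝ} (hd : 0 ≤ d) :
    ((hM.eigenvectorUnitary : Matrix V V ℝ) * diagonal d *
      (star hM.eigenvectorUnitary : Matrix V V ℝ)).PosSemidef := by
  exact (PosSemidef.diagonal hd).mul_mul_conjTranspose_same _

lemma conj_diag_eq {M : Matrix V V ℝ} (hM : M.IsHermitian) (c : ℝ) :
    (hM.eigenvectorUnitary : Matrix V V ℝ) * diagonal (fun i => c - hM.eigenvalues i) *
      (star hM.eigenvectorUnitary : Matrix V V ℝ) = c • (1 : Matrix V V ℝ) - M := by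
  have hUU : (hM.eigenvectorUnitary : Matrix V V ℝ) *
      (star hM.eigenvectorUnitary : Matrix V V ℝ) = 1 :=
    mem_unitaryGroup_iff.mp hM.eigenvectorUnitary.2
  have hdg : diagonal (fun i => c - hM.eigenvalues i) =
      c • (1 : Matrix V V ℝ) - diagonal (RCLike.ofReal ∘ hM.eigenvalues) := by
    ext i j
    by_cases h : i = j
    · subst h; simp [RCLike.ofReal_real_eq_id]
    · simp [diagonal_apply_ne _ h, one_apply_ne h]
  rw [hdg, Matrix.mul_sub, Matrix.sub_mul, Matrix.mul_smul, mul_one, Matrix.smul_mul, hUU,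
    ← Unitary.conjStarAlgAut_apply (S := ℝ), ← hM.spectral_theorem]

lemma psd_smax_sub {M : Matrix V V ℝ} (hM : M.IsHermitian) {c : ℝ}
    (hc : ∀ i, hM.eigenvalues i ≤ c) :
    (c • (1 : Matrix V V ℝ) - M).PosSemidef := by
  rw [← conj_diag_eq hM c]
  exact conj_diag_psd hM (fun i => sub_nonneg.mpr (hc i))

lemma conj_diag_eq' {M : Matrix V V ℝ} (hM : M.IsHermitian) (c : ℝ) :
    (hM.eigenvectorUnitary : Matrix V V ℝ) * diagonal (fun i => hM.eigenvalues i - c) *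
      (star hM.eigenvectorUnitary : Matrix V V ℝ) = M - c • (1 : Matrix V V ℝ) := by
  have hUU : (hM.eigenvectorUnitary : Matrix V V ℝ) *
      (star hM.eigenvectorUnitary : Matrix V V ℝ) = 1 :=
    mem_unitaryGroup_iff.mp hM.eigenvectorUnitary.2
  have hdg : diagonal (fun i => hM.eigenvalues i - c) =
      diagonal (RCLike.ofReal ∘ hM.eigenvalues) - c • (1 : Matrix V V ℝ) := by
    ext i j
    by_cases h : i = j
    · subst h; simp [RCLike.ofReal_real_eq_id]
    · simp [diagonal_apply_ne _ h, one_apply_ne h]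
  rw [hdg, Matrix.mul_sub, Matrix.sub_mul, Matrix.mul_smul, mul_one, Matrix.smul_mul, hUU,
    ← Unitary.conjStarAlgAut_apply (S := ℝ), ← hM.spectral_theorem]

lemma psd_sub_smin {M : Matrix V V ℝ} (hM : M.IsHermitian) {c : ℝ}
    (hc : ∀ i, c ≤ hM.eigenvalues i) :
    (M - c • (1 : Matrix V V ℝ)).PosSemidef := by
  rw [← conj_diag_eq' hM c]
  exact conj_diag_psd hM (fun i => sub_nonneg.mpr (hc i))

lemma isGreatest_lambdaMax [Nonempty V] {M : Matrix V V ℝ} (hM : M.IsHermitian) :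
    IsGreatest (spectrumSet M) (lambdaMax M) := by
  obtain ⟨i0, -, hi0⟩ := Finset.exists_max_image Finset.univ hM.eigenvalues Finset.univ_nonempty
  have hub : ∀ t ∈ spectrumSet M, t ≤ hM.eigenvalues i0 := fun t ht =>
    spectrum_le_of_psd (psd_smax_sub hM (fun i => hi0 i (Finset.mem_univ i))) ht
  have hmem := eig_mem hM i0
  have hg : IsGreatest (spectrumSet M) (hM.eigenvalues i0) := ⟨hmem, hub⟩
  rw [lambdaMax, hg.csSup_eq]; exact hg


lemma isLeast_lambdaMin [Nonempty V] {M : Matrix V V ℝ} (hM : M.IsHermitian) :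
    IsLeast (spectrumSet M) (lambdaMin M) := by
  obtain ⟨i0, -, hi0⟩ := Finset.exists_min_image Finset.univ hM.eigenvalues Finset.univ_nonempty
  have hlb : ∀ t ∈ spectrumSet M, hM.eigenvalues i0 ≤ t := fun t ht =>
    le_spectrum_of_psd (psd_sub_smin hM (fun i => hi0 i (Finset.mem_univ i))) ht
  have hg : IsLeast (spectrumSet M) (hM.eigenvalues i0) := ⟨eig_mem hM i0, hlb⟩
  rw [lambdaMin, hg.csInf_eq]; exact hg

lemma psd_lambdaMax_sub [Nonempty V] {M : Matrix V V ℝ} (hM : M.IsHermitian) :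
    ((lambdaMax M) • (1 : Matrix V V ℝ) - M).PosSemidef :=
  psd_smax_sub hM (fun i => (isGreatest_lambdaMax hM).2 (eig_mem hM i))

lemma psd_sub_lambdaMin [Nonempty V] {M : Matrix V V ℝ} (hM : M.IsHermitian) :
    (M - (lambdaMin M) • (1 : Matrix V V ℝ)).PosSemidef :=
  psd_sub_smin hM (fun i => (isLeast_lambdaMin hM).2 (eig_mem hM i))

lemma rayleigh_le [Nonempty V] {M : Matrix V V ℝ} (hM : M.IsHermitian) (x : V → ℝ) :
    x ⬝ᵥ M.mulVec x ≤ lambdaMax M * (x ⬝ᵥ x) := by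
  have h2 := (psd_lambdaMax_sub hM).dotProduct_mulVec_nonneg x
  rw [sub_mulVec, smul_mulVec, one_mulVec, dotProduct_sub, dotProduct_smul,
    star_trivial, smul_eq_mul, sub_nonneg] at h2
  exact h2

lemma rayleigh_ge [Nonempty V] {M : Matrix V V ℝ} (hM : M.IsHermitian) (x : V → ℝ) :
    lambdaMin M * (x ⬝ᵥ x) ≤ x ⬝ᵥ M.mulVec x := by
  have h2 := (psd_sub_lambdaMin hM).dotProduct_mulVec_nonneg x
  rw [sub_mulVec, smul_mulVec, one_mulVec, dotProduct_sub, dotProduct_smul,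
    star_trivial, smul_eq_mul, sub_nonneg] at h2
  exact h2

lemma lambdaMax_le [Nonempty V] {M : Matrix V V ℝ} (hM : M.IsHermitian) {c : ℝ}
    (h : (c • (1 : Matrix V V ℝ) - M).PosSemidef) : lambdaMax M ≤ c :=
  spectrum_le_of_psd h (isGreatest_lambdaMax hM).1

lemma single_dot_mulVec (M : Matrix V V ℝ) (i : V) :
    (Pi.single i 1 : V → ℝ) ⬝ᵥ M.mulVec (Pi.single i 1) = M i i := by
  simp [dotProduct, Matrix.mulVec, Pi.single_apply, Finset.mul_sum, mul_ite,
    Finset.sum_ite_eq, Finset.sum_ite_eq']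

lemma diag_le_lambdaMax [Nonempty V] {M : Matrix V V ℝ} (hM : M.IsHermitian) (i : V) :
    M i i ≤ lambdaMax M := by
  have := rayleigh_le hM (Pi.single i 1)
  rw [single_dot_mulVec] at this
  have hd : (Pi.single i 1 : V → ℝ) ⬝ᵥ (Pi.single i 1 : V → ℝ) = 1 := by
    simp [dotProduct, Pi.single_apply, Finset.sum_ite_eq']
  rw [hd, mul_one] at this
  exact this

lemma lambdaMax_zero [Nonempty V] : lambdaMax (0 : Matrix V V ℝ) = 0 := by
  have hg : IsGreatest (spectrumSet (0 : Matrix V V ℝ)) 0 := by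
    constructor
    · exact ⟨Pi.single (Classical.arbitrary V) 1, by
        intro h
        have := congrFun h (Classical.arbitrary V)
        simp at this, by funext j; simp⟩
    · rintro t ⟨x, hx, hMx⟩
      rw [zero_mulVec] at hMx
      rcases smul_eq_zero.mp hMx.symm with h | h
      · exact h.le
      · exact absurd h hx
  rw [lambdaMax, hg.csSup_eq]

lemma lambdaMax_nonneg_of_psd [Nonempty V] {M : Matrix V V ℝ} (h : M.PosSemidef) :
    0 ≤ lambdaMax M := by
  obtain ⟨x, hx, he⟩ := (isGreatest_lambdaMax h.1).1
  have h2 := h.dotProduct_mulVec_nonneg x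
  rw [he, dotProduct_smul, star_trivial, smul_eq_mul] at h2
  have hs := dot_self_pos hx
  nlinarith

lemma lambdaMax_smul [Nonempty V] {M : Matrix V V ℝ} (hM : M.IsHermitian) {c : ℝ}
    (hc : 0 < c) : lambdaMax (c • M) = c * lambdaMax M := by
  have hg : IsGreatest (spectrumSet (c • M)) (c * lambdaMax M) := by
    constructor
    · obtain ⟨x, hx, he⟩ := (isGreatest_lambdaMax hM).1
      exact ⟨x, hx, by rw [smul_mulVec, he, smul_smul]⟩
    · rintro t ⟨x, hx, hMx⟩
      rw [smul_mulVec] at hMx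
      have : M.mulVec x = (t / c) • x := by
        have := congrArg (fun v => c⁻¹ • v) hMx
        simpa [smul_smul, inv_mul_cancel₀ hc.ne', div_eq_inv_mul] using this
      have ht : t / c ≤ lambdaMax M := (isGreatest_lambdaMax hM).2 ⟨x, hx, this⟩
      calc t = c * (t / c) := by field_simp
      _ ≤ c * lambdaMax M := by exact mul_le_mul_of_nonneg_left ht hc.le
  rw [lambdaMax, hg.csSup_eq]

lemma lambdaMax_add_le [Nonempty V] {M N : Matrix V V ℝ} (hM : M.IsHermitian)
    (hN : N.IsHermitian) : lambdaMax (M + N) ≤ lambdaMax M + lambdaMax N := by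
  obtain ⟨x, hx, he⟩ := (isGreatest_lambdaMax (hM.add hN)).1
  have h1 := rayleigh_le hM x
  have h2 := rayleigh_le hN x
  have h3 : x ⬝ᵥ (M + N).mulVec x = lambdaMax (M + N) * (x ⬝ᵥ x) := by
    rw [he, dotProduct_smul, smul_eq_mul]
  rw [add_mulVec, dotProduct_add] at h3
  have hs := dot_self_pos hx
  nlinarith

lemma lambdaMax_mono [Nonempty V] {M N : Matrix V V ℝ} (hM : M.IsHermitian)
    (hN : N.IsHermitian) (h : (N - M).PosSemidef) : lambdaMax M ≤ lambdaMax N := by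
  obtain ⟨x, hx, he⟩ := (isGreatest_lambdaMax hM).1
  have h1 := h.dotProduct_mulVec_nonneg x
  rw [sub_mulVec, dotProduct_sub, star_trivial, sub_nonneg] at h1
  have h2 := rayleigh_le hN x
  have h3 : x ⬝ᵥ M.mulVec x = lambdaMax M * (x ⬝ᵥ x) := by
    rw [he, dotProduct_smul, smul_eq_mul]
  have hs := dot_self_pos hx
  nlinarith

lemma lambdaMax_conj_comm [Nonempty V] (P : Matrix V V ℝ) :
    lambdaMax (Pᴴ * P) = lambdaMax (P * Pᴴ) := by
  have key : ∀ Q : Matrix V V ℝ, lambdaMax (Qᴴ * Q) ≤ lambdaMax (Q * Qᴴ) := by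
    intro Q
    obtain ⟨x, hx, he⟩ := (isGreatest_lambdaMax (posSemidef_conjTranspose_mul_self Q).1).1
    by_cases hQx : Q.mulVec x = 0
    · have : lambdaMax (Qᴴ * Q) • x = 0 := by
        rw [← he, ← mulVec_mulVec, hQx, mulVec_zero]
      rcases smul_eq_zero.mp this with h | h
      · exact h.le.trans (lambdaMax_nonneg_of_psd (posSemidef_self_mul_conjTranspose Q))
      · exact absurd h hx
    · refine (isGreatest_lambdaMax (posSemidef_self_mul_conjTranspose Q).1).2 ⟨Q.mulVec x, hQx, ?_⟩
      rw [mulVec_mulVec, mul_assoc]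
      conv_lhs => rw [← mulVec_mulVec]
      rw [he, mulVec_smul]
  have h2 := key Pᴴ
  rw [conjTranspose_conjTranspose] at h2
  exact le_antisymm (key P) h2


lemma spectrumSet_empty [IsEmpty V] (M : Matrix V V ℝ) : spectrumSet M = ∅ := by
  ext t
  simp only [spectrumSet, Set.mem_setOf_eq, Set.mem_empty_iff_false, iff_false, not_exists]
  intro x hx
  exact absurd (funext fun i => isEmptyElim i : x = 0) hx.1

lemma lambdaMax_of_isEmpty [IsEmpty V] (M : Matrix V V ℝ) : lambdaMax M = 0 := by
  rw [lambdaMax, spectrumSet_empty, Real.sSup_empty]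

lemma trace_eq_sum_eig {M : Matrix V V ℝ} (hM : M.IsHermitian) :
    M.trace = ∑ i, hM.eigenvalues i := by
  have hUU : (star hM.eigenvectorUnitary : Matrix V V ℝ) *
      (hM.eigenvectorUnitary : Matrix V V ℝ) = 1 :=
    mem_unitaryGroup_iff'.mp hM.eigenvectorUnitary.2
  conv_lhs => rw [hM.spectral_theorem]
  rw [Unitary.conjStarAlgAut_apply, Matrix.trace_mul_comm, ← mul_assoc, hUU, one_mul, trace_diagonal]
  simp [RCLike.ofReal_real_eq_id]

lemma eq_zero_of_eig_zero {M : Matrix V V ℝ} (hM : M.IsHermitian)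
    (h : ∀ i, hM.eigenvalues i = 0) : M = 0 := by
  have hdg : diagonal (RCLike.ofReal ∘ hM.eigenvalues) = (0 : Matrix V V ℝ) := by
    ext i j
    by_cases hij : i = j
    · subst hij; simp [h, RCLike.ofReal_real_eq_id]
    · simp [diagonal_apply_ne _ hij]
  conv_lhs => rw [hM.spectral_theorem]
  rw [hdg, Unitary.conjStarAlgAut_apply, mul_zero, zero_mul]

lemma lambdaMin_neg [Nonempty V] {M : Matrix V V ℝ} (hM : M.IsHermitian)
    (hdiag : ∀ i, M i i = 0) (h0 : M ≠ 0) : lambdaMin M < 0 := by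
  by_contra h
  push_neg at h
  have heig : ∀ i, 0 ≤ hM.eigenvalues i := fun i =>
    h.trans ((isLeast_lambdaMin hM).2 (eig_mem hM i))
  have hsum : ∑ i, hM.eigenvalues i = 0 := by
    rw [← trace_eq_sum_eig hM, Matrix.trace]
    simp [Matrix.diag, hdiag]
  have hall := (Finset.sum_eq_zero_iff_of_nonneg (fun i _ => heig i)).mp hsum
  exact h0 (eq_zero_of_eig_zero hM (fun i => hall i (Finset.mem_univ i)))

lemma nonempty_of_ne_zero {M : Matrix V V ℝ} (h : M ≠ 0) : Nonempty V := by
  by_contra hne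
  rw [not_nonempty_iff] at hne
  exact h (by ext i j; exact hne.elim i)

section Graph

variable {A : Matrix V V ℝ}

lemma hatM_apply_zero {i j : V} (hzero : A i j = 0) : hatM A i j = 0 := by
  rw [hatM]
  split
  · simp
  · simp [Matrix.smul_apply, hzero]

lemma hatM_herm (hs : A.IsSymm) : (hatM A).IsHermitian := by
  rw [hatM]
  split
  · exact isHermitian_zero
  · have h := isHermitian_of_isSymm hs
    rw [Matrix.IsHermitian, conjTranspose_smul, star_trivial, h]

lemma B_herm (hs : A.IsSymm) : ((1 : Matrix V V ℝ) + hatM A).IsHermitian :=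
  isHermitian_one.add (hatM_herm hs)

lemma B_diag (hd : ∀ i, A i i = 0) (i : V) : ((1 : Matrix V V ℝ) + hatM A) i i = 1 := by
  rw [Matrix.add_apply, hatM_apply_zero (hd i), one_apply_eq, add_zero]

lemma B_off {i j : V} (hij : i ≠ j) (hz : A i j = 0) :
    ((1 : Matrix V V ℝ) + hatM A) i j = 0 := by
  rw [Matrix.add_apply, hatM_apply_zero hz, one_apply_ne hij, add_zero]

lemma B_psd (hs : A.IsSymm) (hd : ∀ i, A i i = 0) :
    ((1 : Matrix V V ℝ) + hatM A).PosSemidef := by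
  by_cases h0 : A = 0
  · rw [hatM, if_pos h0, add_zero]
    exact PosSemidef.one
  · have : Nonempty V := nonempty_of_ne_zero h0
    have hAh := isHermitian_of_isSymm hs
    have hmin : lambdaMin A < 0 := lambdaMin_neg hAh hd h0
    refine .of_dotProduct_mulVec_nonneg (B_herm hs) fun x => ?_
    rw [star_trivial, add_mulVec, one_mulVec, dotProduct_add, hatM, if_neg h0,
      smul_mulVec, dotProduct_smul, smul_eq_mul]
    have hr := rayleigh_ge hAh x
    have hs' := dot_self_nonneg x
    have hinv : 0 < (-lambdaMin A)⁻¹ := inv_pos.mpr (neg_pos.mpr hmin)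
    have hle := mul_le_mul_of_nonneg_left hr hinv.le
    have heq : (-lambdaMin A)⁻¹ * (lambdaMin A * (x ⬝ᵥ x)) = -(x ⬝ᵥ x) := by
      rw [inv_neg, neg_mul, ← mul_assoc, inv_mul_cancel₀ hmin.ne, one_mul]
    linarith

lemma psdSqrt_of_psd {M : Matrix V V ℝ} (h : M.PosSemidef) : psdSqrt M = h.sqrt := by
  rw [psdSqrt]
  exact dif_pos h

lemma psdSqrt_diagonal {w : V → ℝ} (hw : 0 ≤ w) :
    psdSqrt (diagonal w) = diagonal (fun i => Real.sqrt (w i)) := by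
  have hd : (diagonal w).PosSemidef := .diagonal hw
  rw [psdSqrt_of_psd hd]
  refine ((PosSemidef.diagonal (fun i => Real.sqrt_nonneg (w i))).eq_sqrt_of_sq_eq hd ?_).symm
  have h1 : (fun i => Real.sqrt (w i) * Real.sqrt (w i)) = w :=
    funext fun i => Real.mul_self_sqrt (hw i)
  rw [pow_two, diagonal_mul_diagonal, h1]

/-- `MM w = diag(√w) B diag(√w)`. -/
noncomputable def MM (A : Matrix V V ℝ) (w : V → ℝ) : Matrix V V ℝ :=
  diagonal (fun i => Real.sqrt (w i)) * ((1 : Matrix V V ℝ) + hatM A) *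
    diagonal (fun i => Real.sqrt (w i))

/-- `NN w = √B diag(w) √B`. -/
noncomputable def NN (hB : ((1 : Matrix V V ℝ) + hatM A).PosSemidef) (w : V → ℝ) :
    Matrix V V ℝ :=
  hB.sqrt * diagonal w * hB.sqrt

lemma hoffman_eq_MM {w : V → ℝ} (hw : 0 ≤ w) : hoffman A w = lambdaMax (MM A w) := by
  rw [hoffman, psdSqrt_diagonal hw, MM]

lemma MM_eq_conj (hB : ((1 : Matrix V V ℝ) + hatM A).PosSemidef) (w : V → ℝ) :
    MM A w = (hB.sqrt * diagonal (fun i => Real.sqrt (w i)))ᴴ *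
      (hB.sqrt * diagonal (fun i => Real.sqrt (w i))) := by
  rw [conjTranspose_mul, hB.posSemidef_sqrt.1, (isHermitian_diagonal _).eq, MM]
  conv_lhs => rw [← hB.sqrt_mul_self]
  noncomm_ring

lemma NN_eq_conj (hB : ((1 : Matrix V V ℝ) + hatM A).PosSemidef) {w : V → ℝ} (hw : 0 ≤ w) :
    NN hB w = (hB.sqrt * diagonal (fun i => Real.sqrt (w i))) *
      (hB.sqrt * diagonal (fun i => Real.sqrt (w i)))ᴴ := by
  rw [conjTranspose_mul, hB.posSemidef_sqrt.1, (isHermitian_diagonal _).eq, NN]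
  have h1 : diagonal w = diagonal (fun i => Real.sqrt (w i)) *
      diagonal (fun i => Real.sqrt (w i)) := by
    rw [diagonal_mul_diagonal]
    exact congrArg _ (funext fun i => (Real.mul_self_sqrt (hw i)).symm)
  rw [h1]
  noncomm_ring

lemma lambdaMax_MM_eq_NN [Nonempty V] (hB : ((1 : Matrix V V ℝ) + hatM A).PosSemidef)
    {w : V → ℝ} (hw : 0 ≤ w) : lambdaMax (MM A w) = lambdaMax (NN hB w) := by
  rw [MM_eq_conj hB, NN_eq_conj hB hw, lambdaMax_conj_comm]

lemma hoffman_eq_NN [Nonempty V] (hB : ((1 : Matrix V V ℝ) + hatM A).PosSemidef)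
    {w : V → ℝ} (hw : 0 ≤ w) : hoffman A w = lambdaMax (NN hB w) := by
  rw [hoffman_eq_MM hw, lambdaMax_MM_eq_NN hB hw]

lemma NN_herm (hB : ((1 : Matrix V V ℝ) + hatM A).PosSemidef) (w : V → ℝ) :
    (NN hB w).IsHermitian := by
  rw [NN, Matrix.IsHermitian, conjTranspose_mul, conjTranspose_mul, hB.posSemidef_sqrt.1,
    (isHermitian_diagonal _).eq, mul_assoc]

lemma NN_psd (hB : ((1 : Matrix V V ℝ) + hatM A).PosSemidef) {w : V → ℝ} (hw : 0 ≤ w) :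
    (NN hB w).PosSemidef := by
  rw [NN_eq_conj hB hw]
  exact posSemidef_self_mul_conjTranspose _

lemma NN_add (hB : ((1 : Matrix V V ℝ) + hatM A).PosSemidef) (w z : V → ℝ) :
    NN hB (w + z) = NN hB w + NN hB z := by
  have hD : diagonal (w + z) = diagonal w + diagonal z := by
    ext i j
    by_cases h : i = j
    · subst h; simp
    · simp [diagonal_apply_ne _ h]
  rw [NN, NN, NN, hD, Matrix.mul_add, Matrix.add_mul]

lemma NN_sub (hB : ((1 : Matrix V V ℝ) + hatM A).PosSemidef) (w z : V → ℝ) :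
    NN hB (w - z) = NN hB w - NN hB z := by
  have hD : diagonal (w - z) = diagonal w - diagonal z := by
    ext i j
    by_cases h : i = j
    · subst h; simp
    · simp [diagonal_apply_ne _ h]
  rw [NN, NN, NN, hD, Matrix.mul_sub, Matrix.sub_mul]

lemma NN_smul (hB : ((1 : Matrix V V ℝ) + hatM A).PosSemidef) (c : ℝ) (w : V → ℝ) :
    NN hB (c • w) = c • NN hB w := by
  have hD : diagonal (c • w) = c • diagonal w := by
    ext i j
    by_cases h : i = j
    · subst h; simp
    · simp [diagonal_apply_ne _ h]
  rw [NN, NN, hD, Matrix.mul_smul, Matrix.smul_mul]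

end Graph

lemma MM_stable {G : SimpleGraph V} (hz : ∀ i j, ¬ G.Adj i j → A i j = 0)
    (hd : ∀ i, A i i = 0) {S : Finset V} (hS : IsStableSet G S) :
    MM A (fun i => if i ∈ S then (1:ℝ) else 0) =
      diagonal (fun i => if i ∈ S then (1:ℝ) else 0) := by
  have hsq : (fun i => Real.sqrt (if i ∈ S then (1:ℝ) else 0)) =
      (fun i => if i ∈ S then (1:ℝ) else 0) := by
    funext i; by_cases h : i ∈ S <;> simp [h]
  rw [MM, hsq]
  ext i j
  rw [Matrix.mul_diagonal, Matrix.diagonal_mul]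
  by_cases hij : i = j
  · subst hij
    rw [B_diag hd i, diagonal_apply_eq]
    by_cases hi : i ∈ S <;> simp [hi]
  · rw [diagonal_apply_ne _ hij]
    by_cases hi : i ∈ S
    · by_cases hj : j ∈ S
      · rw [B_off hij (hz i j (hS i hi j hj))]; ring
      · simp [hj]
    · simp [hi]

lemma lambdaMax_diag_indicator_le [Nonempty V] (S : Finset V) :
    lambdaMax (diagonal (fun i => if i ∈ S then (1:ℝ) else 0)) ≤ 1 := by
  apply lambdaMax_le (isHermitian_diagonal _)
  have h1 : (1:ℝ) • (1 : Matrix V V ℝ) - diagonal (fun i => if i ∈ S then (1:ℝ) else 0) =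
      diagonal (fun i => 1 - (if i ∈ S then (1:ℝ) else 0)) := by
    ext i j
    by_cases h : i = j
    · subst h; simp
    · simp [diagonal_apply_ne _ h, one_apply_ne h]
  rw [h1]
  exact PosSemidef.diagonal (fun i => by by_cases h : i ∈ S <;> simp [h])

lemma isHermitian_fsum {ι : Type*} (s : Finset ι) (f : ι → Matrix V V ℝ)
    (h : ∀ i ∈ s, (f i).IsHermitian) : (∑ i ∈ s, f i).IsHermitian := by
  classical
  induction s using Finset.induction_on with
  | empty => simpa using isHermitian_zero
  | insert _ _ ha ih =>
    rw [Finset.sum_insert ha]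
    exact (h _ (Finset.mem_insert_self _ _)).add
      (ih (fun i hi => h i (Finset.mem_insert_of_mem hi)))

end HPAux

/-- the weighted Hoffman bound `H(A,·)` is a positive definite
monotone gauge and `‖w‖_∞ ≤ H(A,w) ≤ χ_f(G,w)` for every `w ≥ 0`. -/
theorem hoffman_pdmg_bound (G : SimpleGraph V) (A : Matrix V V ℝ)
    (hA : IsGenAdj G A) :
    IsPDMGauge (hoffman A) ∧
    ∀ w : V → ℝ, 0 ≤ w → (⨆ i, |w i|) ≤ hoffman A w ∧ hoffman A w ≤ chiF G w := by
  classical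
  obtain ⟨hs, hz⟩ := hA
  have hd : ∀ i, A i i = 0 := fun i => hz i i (G.irrefl)
  have hB : ((1 : Matrix V V ℝ) + hatM A).PosSemidef := HPAux.B_psd hs hd
  rcases isEmpty_or_nonempty V with hE | hN
  · -- empty vertex set
    have h0 : ∀ w : V → ℝ, hoffman A w = 0 := fun w => HPAux.lambdaMax_of_isEmpty _
    have hchi : ∀ w : V → ℝ, 0 ≤ chiF G w := fun w => Real.sInf_nonneg (by
      rintro r ⟨y, hy0, -, -, rfl⟩
      exact Finset.sum_nonneg fun S _ => hy0 S)
    refine ⟨⟨h0 0, fun w _ => (h0 w).ge, fun c w _ _ => by rw [h0, h0, mul_zero],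
      fun w z _ _ => by rw [h0, h0, h0, add_zero],
      fun w _ hne => absurd (funext fun i => isEmptyElim i) hne,
      fun w z _ _ => by rw [h0, h0]⟩, fun w hw => ⟨?_, ?_⟩⟩
    · rw [h0, Real.iSup_of_isEmpty]
    · rw [h0]; exact hchi w
  · -- nonempty vertex set
    have hlow : ∀ (w : V → ℝ), 0 ≤ w → ∀ i, w i ≤ hoffman A w := by
      intro w hw i
      rw [HPAux.hoffman_eq_MM hw]
      have hMH : (HPAux.MM A w).IsHermitian := by
        rw [HPAux.MM_eq_conj hB]
        exact (Matrix.posSemidef_conjTranspose_mul_self _).1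
      have h1 := HPAux.diag_le_lambdaMax hMH i
      have hdiag : HPAux.MM A w i i = w i := by
        rw [HPAux.MM, Matrix.mul_diagonal, Matrix.diagonal_mul, HPAux.B_diag hd i, mul_one]
        exact Real.mul_self_sqrt (hw i)
      linarith [hdiag ▸ h1]
    have hM0 : hoffman A 0 = 0 := by
      rw [HPAux.hoffman_eq_MM le_rfl]
      have h2 : HPAux.MM A (0 : V → ℝ) = 0 := by
        rw [HPAux.MM]
        have h3 : (fun i => Real.sqrt ((0 : V → ℝ) i)) = (fun _ : V => (0:ℝ)) := by
          funext i; simp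
        rw [h3, Matrix.diagonal_zero, Matrix.zero_mul, Matrix.zero_mul]
      rw [h2, HPAux.lambdaMax_zero]
    have hhom : ∀ (c : ℝ) (w : V → ℝ), 0 < c → 0 ≤ w →
        hoffman A (c • w) = c * hoffman A w := by
      intro c w hc hw
      have hcw : 0 ≤ c • w := smul_nonneg hc.le hw
      rw [HPAux.hoffman_eq_NN hB hcw, HPAux.hoffman_eq_NN hB hw, HPAux.NN_smul,
        HPAux.lambdaMax_smul (HPAux.NN_herm hB w) hc]
    have hsub : ∀ w z : V → ℝ, 0 ≤ w → 0 ≤ z →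
        hoffman A (w + z) ≤ hoffman A w + hoffman A z := by
      intro w z hw hz'
      rw [HPAux.hoffman_eq_NN hB (add_nonneg hw hz'), HPAux.hoffman_eq_NN hB hw,
        HPAux.hoffman_eq_NN hB hz', HPAux.NN_add]
      exact HPAux.lambdaMax_add_le (HPAux.NN_herm hB w) (HPAux.NN_herm hB z)
    have hmono : ∀ w z : V → ℝ, 0 ≤ w → w ≤ z → hoffman A w ≤ hoffman A z := by
      intro w z hw hwz
      have hz' : 0 ≤ z := hw.trans hwz
      rw [HPAux.hoffman_eq_NN hB hw, HPAux.hoffman_eq_NN hB hz']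
      apply HPAux.lambdaMax_mono (HPAux.NN_herm hB w) (HPAux.NN_herm hB z)
      rw [← HPAux.NN_sub]
      exact HPAux.NN_psd hB (sub_nonneg.mpr hwz)
    have hupper : ∀ w : V → ℝ, 0 ≤ w → hoffman A w ≤ chiF G w := by
      intro w hw
      rw [chiF]
      apply le_csInf
      · -- the feasible set is nonempty
        refine ⟨_, fun S => ∑ i, if S = {i} then w i else 0, ?_, ?_, ?_, rfl⟩
        · intro S
          exact Finset.sum_nonneg fun i _ => by
            by_cases h : S = {i}
            · rw [if_pos h]; exact hw i
            · rw [if_neg h]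
        · intro S hSns
          apply Finset.sum_eq_zero
          intro i _
          rw [if_neg]
          intro hSi
          apply hSns
          intro a ha b hb
          rw [hSi, Finset.mem_singleton] at ha hb
          rw [ha, hb]
          exact G.irrefl
        · intro i
          have hterm : (if i ∈ ({i} : Finset V) then
              (∑ j, if ({i} : Finset V) = {j} then w j else 0) else 0) = w i := by
            rw [if_pos (Finset.mem_singleton_self i)]
            rw [Finset.sum_eq_single i (fun j _ hji => if_neg (by
              simp only [Finset.singleton_inj]; exact fun h => hji h.symm))
              (fun h => absurd (Finset.mem_univ i) h)]
            rw [if_pos rfl]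
          calc w i = _ := hterm.symm
            _ ≤ ∑ S : Finset V, (if i ∈ S then (∑ j, if S = {j} then w j else 0) else 0) := by
              apply Finset.single_le_sum (f := fun S : Finset V =>
                (if i ∈ S then (∑ j, if S = {j} then w j else 0) else 0))
                (fun S _ => ?_) (Finset.mem_univ ({i} : Finset V))
              by_cases h : i ∈ S
              · rw [if_pos h]
                exact Finset.sum_nonneg fun j _ => by
                  by_cases h2 : S = {j}
                  · rw [if_pos h2]; exact hw j
                  · rw [if_neg h2]
              · rw [if_neg h]
      · rintro r ⟨y, hy0, hyst, hyw, rfl⟩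
        have hSbound : ∀ S : Finset V,
            hoffman A (fun i => if i ∈ S then y S else 0) ≤ y S := by
          intro S
          by_cases hyS : y S = 0
          · have h4 : (fun i => if i ∈ S then y S else 0) = (0 : V → ℝ) := by
              funext i; simp [hyS]
            rw [h4, hM0, hyS]
          · have hSst : IsStableSet G S := by
              by_contra hns; exact hyS (hyst S hns)
            have hypos : 0 < y S := lt_of_le_of_ne (hy0 S) (Ne.symm hyS)
            have hind0 : 0 ≤ (fun i => if i ∈ S then (1:ℝ) else 0) := fun i => by
              by_cases h : i ∈ S <;> simp [h]
            have hfun : (fun i => if i ∈ S then y S else 0) =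
                y S • (fun i => if i ∈ S then (1:ℝ) else 0) := by
              funext i; by_cases h : i ∈ S <;> simp [h]
            rw [hfun, hhom (y S) _ hypos hind0]
            have hchi1 : hoffman A (fun i => if i ∈ S then (1:ℝ) else 0) ≤ 1 := by
              rw [HPAux.hoffman_eq_MM hind0, HPAux.MM_stable hz hd hSst]
              exact HPAux.lambdaMax_diag_indicator_le S
            calc y S * hoffman A (fun i => if i ∈ S then (1:ℝ) else 0)
                ≤ y S * 1 := mul_le_mul_of_nonneg_left hchi1 (hy0 S)
              _ = y S := mul_one _
        have hind : ∀ T : Finset (Finset V),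
            hoffman A (fun i => ∑ S ∈ T, (if i ∈ S then y S else 0)) ≤ ∑ S ∈ T, y S := by
          intro T
          induction T using Finset.induction_on with
          | empty => simp only [Finset.sum_empty]; exact hM0.le
          | @insert S T hST ih =>
            have hsplit : (fun i => ∑ S' ∈ insert S T, (if i ∈ S' then y S' else 0)) =
                (fun i => if i ∈ S then y S else 0) +
                  (fun i => ∑ S' ∈ T, (if i ∈ S' then y S' else 0)) := by
              funext i; simp [Finset.sum_insert hST]
            rw [hsplit, Finset.sum_insert hST]
            have hn1 : 0 ≤ (fun i => if i ∈ S then y S else 0) := fun i => by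
              by_cases h : i ∈ S <;> simp [h, hy0 S]
            have hn2 : 0 ≤ (fun i => ∑ S' ∈ T, (if i ∈ S' then y S' else 0)) := fun i =>
              Finset.sum_nonneg fun S' _ => by
                by_cases h : i ∈ S' <;> simp [h, hy0 S']
            exact (hsub _ _ hn1 hn2).trans (add_le_add (hSbound S) ih)
        have hwle : w ≤ (fun i => ∑ S : Finset V, (if i ∈ S then y S else 0)) := hyw
        exact (hmono _ _ hw hwle).trans (hind Finset.univ)
    refine ⟨⟨hM0, fun w hw => ?_, hhom, hsub, fun w hw hne => ?_, hmono⟩,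
      fun w hw => ⟨?_, hupper w hw⟩⟩
    · exact le_trans (hw hN.some) (hlow w hw hN.some)
    · obtain ⟨i, hi⟩ := Function.ne_iff.mp hne
      exact lt_of_lt_of_le (lt_of_le_of_ne (hw i) (Ne.symm hi)) (hlow w hw i)
    · exact ciSup_le fun i => by rw [abs_of_nonneg (hw i)]; exact hlow w hw i
end

section
/- Let G = (V,E) be a connected finite simple graph with at least one edge, let λ := λ_max(A_G) and τ := λ_min(A_G), and let p ∈ ℝ₊^V be the unit-norm Perron-Frobenius eigenvector of A_G (the entrywise nonnegative eigenvector with eigenvalue λ and Euclidean norm 1). Then α(G) ≤ (max_{i∈V} p_i^{−2}) / (1 − λ/τ). -/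
open scoped BigOperators Pointwise

variable {V : Type*} [Fintype V] [DecidableEq V]

set_option linter.unusedSectionVars false in
lemma dotsym' (M : Matrix V V ℝ) (hM : M.IsHermitian) (u z : V → ℝ) :
    ∑ i, u i * M.mulVec z i = ∑ i, M.mulVec u i * z i := by
  have hMe : ∀ a b, M a b = M b a := fun a b => by
    have := congrFun (congrFun hM.eq a) b
    simpa [Matrix.conjTranspose_apply] using this.symm
  calc ∑ i, u i * M.mulVec z i = ∑ i, ∑ k, u i * (M i k * z k) := by
        simp [Matrix.mulVec, dotProduct, Finset.mul_sum]
    _ = ∑ k, ∑ i, u i * (M i k * z k) := Finset.sum_comm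
    _ = ∑ k, M.mulVec u k * z k := by
        refine Finset.sum_congr rfl fun k _ => ?_
        simp only [Matrix.mulVec, dotProduct, Finset.sum_mul]
        refine Finset.sum_congr rfl fun i _ => ?_
        rw [hMe k i]; ring

set_option linter.unusedSectionVars false in
lemma parseval' (M : Matrix V V ℝ) (hM : M.IsHermitian) (z : V → ℝ) :
    (∑ i, z i * z i) = ∑ j, (∑ i, hM.eigenvectorBasis j i * z i)^2 := by
  classical
  have h1 := hM.eigenvectorBasis.sum_inner_mul_inner (WithLp.toLp 2 z) (WithLp.toLp 2 z)
  simp only [PiLp.inner_apply, RCLike.inner_apply, conj_trivial] at h1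
  rw [← h1]
  refine Finset.sum_congr rfl fun j _ => ?_
  rw [sq]
  congr 1
  exact Finset.sum_congr rfl fun i _ => mul_comm _ _

set_option linter.unusedSectionVars false in
lemma qform_eq' (M : Matrix V V ℝ) (hM : M.IsHermitian) (z : V → ℝ) :
    (∑ i, z i * M.mulVec z i) =
      ∑ j, hM.eigenvalues j * (∑ i, hM.eigenvectorBasis j i * z i)^2 := by
  classical
  have h1 := hM.eigenvectorBasis.sum_inner_mul_inner (WithLp.toLp 2 (M.mulVec z : V → ℝ))
    (WithLp.toLp 2 z)
  simp only [PiLp.inner_apply, RCLike.inner_apply, conj_trivial] at h1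
  rw [← h1]
  refine Finset.sum_congr rfl fun j _ => ?_
  have hb := hM.mulVec_eigenvectorBasis j
  have hsym : ∑ i, hM.eigenvectorBasis j i * M.mulVec z i
      = ∑ i, (hM.eigenvalues j * hM.eigenvectorBasis j i) * z i := by
    rw [dotsym' M hM _ z]
    refine Finset.sum_congr rfl fun i _ => ?_
    have : M.mulVec (fun i => hM.eigenvectorBasis j i) i
        = hM.eigenvalues j * hM.eigenvectorBasis j i := by
      have := congrFun hb i
      simpa using this
    rw [this]
  rw [hsym]
  have e2 : ∑ x, z x * hM.eigenvectorBasis j x = ∑ x, hM.eigenvectorBasis j x * z x :=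
    Finset.sum_congr rfl fun i _ => mul_comm _ _
  have e1 : ∑ i, hM.eigenvalues j * hM.eigenvectorBasis j i * z i
      = hM.eigenvalues j * ∑ i, hM.eigenvectorBasis j i * z i := by
    rw [Finset.mul_sum]; exact Finset.sum_congr rfl fun i _ => by ring
  rw [e2, e1]; ring

set_option linter.unusedSectionVars false in
lemma rayleigh_min' (M : Matrix V V ℝ) (hM : M.IsHermitian) (y : V → ℝ) :
    lambdaMin M * (∑ i, y i * y i) ≤ ∑ i, y i * M.mulVec y i := by
  classical
  cases isEmpty_or_nonempty V
  · simp
  obtain ⟨j0, -, hj0⟩ := Finset.exists_min_image Finset.univ hM.eigenvalues ⟨Classical.arbitrary V, Finset.mem_univ _⟩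
  have hray : ∀ z : V → ℝ, hM.eigenvalues j0 * (∑ i, z i * z i) ≤ ∑ i, z i * M.mulVec z i := by
    intro z
    rw [qform_eq' M hM z, parseval' M hM z, Finset.mul_sum]
    refine Finset.sum_le_sum fun j _ => ?_
    exact mul_le_mul_of_nonneg_right (hj0 j (Finset.mem_univ j)) (sq_nonneg _)
  have hlb : ∀ t ∈ spectrumSet M, hM.eigenvalues j0 ≤ t := by
    rintro t ⟨x, hx0, hx⟩
    have hpos : 0 < ∑ i, x i * x i := by
      have h1 : ∀ i, 0 ≤ x i * x i := fun i => mul_self_nonneg _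
      rcases Function.ne_iff.1 hx0 with ⟨i, hi⟩
      exact Finset.sum_pos' (fun i _ => h1 i) ⟨i, Finset.mem_univ i, mul_self_pos.2 hi⟩
    have h2 := hray x
    have h3 : ∑ i, x i * M.mulVec x i = t * ∑ i, x i * x i := by
      rw [hx]; rw [Finset.mul_sum]
      exact Finset.sum_congr rfl fun i _ => by rw [Pi.smul_apply, smul_eq_mul]; ring
    rw [h3] at h2
    exact le_of_mul_le_mul_right h2 hpos
  have hmem : hM.eigenvalues j0 ∈ spectrumSet M := by
    refine ⟨fun i => hM.eigenvectorBasis j0 i, ?_, ?_⟩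
    · intro h
      have h2 := hM.eigenvectorBasis.orthonormal.1 j0
      rw [show (hM.eigenvectorBasis j0 : EuclideanSpace ℝ V) = 0 from WithLp.ofLp_injective (p := 2) (funext fun i => congrFun h i)] at h2
      simp at h2
    · have := hM.mulVec_eigenvectorBasis j0
      funext i
      have := congrFun this i
      simpa using this
  have hle : lambdaMin M ≤ hM.eigenvalues j0 := csInf_le ⟨_, hlb⟩ hmem
  calc lambdaMin M * (∑ i, y i * y i) ≤ hM.eigenvalues j0 * (∑ i, y i * y i) := by
        apply mul_le_mul_of_nonneg_right hle
        exact Finset.sum_nonneg fun i _ => mul_self_nonneg _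
    _ ≤ _ := hray y


lemma arith_final (n D m R : ℝ) (hn : 0 < n) (hD : 0 < D) (hm : 0 < m)
    (h10 : D * (n * m)^2 ≤ n) (hsup : (m^2)⁻¹ ≤ R) : n ≤ R / D := by
  have h11 : D * n * m^2 ≤ 1 := by nlinarith
  have h12 : n ≤ (m^2)⁻¹ / D := by
    have hid : (m^2)⁻¹ / D * (D * m^2) = 1 := by field_simp [mul_comm]
    nlinarith [mul_pos hD (pow_pos hm 2)]
  exact h12.trans (by gcongr)


/-- the Perron-eigenvector bound
`α(G) ≤ (max_i p_i^{−2}) / (1 − λ/τ)` for connected graphs. -/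
theorem alpha_bound_perron [Nonempty V] (G : SimpleGraph V) [DecidableRel G.Adj]
    (hconn : G.Connected) (hedge : ∃ i j : V, G.Adj i j)
    (p : V → ℝ) (hp0 : 0 ≤ p) (hpnorm : ∑ i, p i ^ 2 = 1)
    (hpe : (G.adjMatrix ℝ).mulVec p = lambdaMax (G.adjMatrix ℝ) • p) :
    (stabilityNumber G : ℝ) ≤
      (⨆ i, (p i ^ 2)⁻¹) /
        (1 - lambdaMax (G.adjMatrix ℝ) / lambdaMin (G.adjMatrix ℝ)) := by
  classical
  set A := G.adjMatrix ℝ with hAdef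
  set lam := lambdaMax A with hlam
  set tau := lambdaMin A with htau
  have hA : A.IsHermitian := by
    ext i j
    simp [hAdef, Matrix.conjTranspose_apply, G.adj_comm]
  -- p is strictly positive
  have hppos : ∀ i, 0 < p i := by
    by_contra h
    push_neg at h
    obtain ⟨i0, hi0⟩ := h
    have hi0' : p i0 = 0 := le_antisymm hi0 (hp0 i0)
    -- zero propagates along walks
    have hstep : ∀ i, p i = 0 → ∀ j, G.Adj i j → p j = 0 := by
      intro i hi j hij
      have h1 : A.mulVec p i = 0 := by rw [hpe]; simp [hi]
      have h2 : A.mulVec p i = ∑ k, A i k * p k := by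
        simp [Matrix.mulVec, dotProduct]
      have h3 : ∀ k, 0 ≤ A i k * p k := by
        intro k
        apply mul_nonneg _ (hp0 k)
        simp [hAdef, SimpleGraph.adjMatrix]
        positivity
      have h4 : A i j * p j = 0 := by
        have := (Finset.sum_eq_zero_iff_of_nonneg (fun k _ => h3 k)).1 (h2 ▸ h1) j (Finset.mem_univ j)
        exact this
      have h5 : A i j = 1 := by simp [hAdef, hij]
      rw [h5, one_mul] at h4
      exact h4
    have hwalk : ∀ {i j : V}, G.Walk i j → p i = 0 → p j = 0 := by
      intro i j w
      induction w with
      | nil => exact id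
      | cons h w ih => intro hi; exact ih (hstep _ hi _ h)
    have hall : ∀ j, p j = 0 := fun j => hwalk ((hconn i0 j).some) hi0'
    rw [Finset.sum_eq_zero (fun i _ => by rw [hall i]; ring)] at hpnorm
    norm_num at hpnorm
  -- lam > 0
  have hlampos : 0 < lam := by
    obtain ⟨i, j, hij⟩ := hedge
    have h1 : A.mulVec p i = lam * p i := by rw [hpe]; simp
    have h2 : A.mulVec p i = ∑ k, A i k * p k := by
      simp [Matrix.mulVec, dotProduct]
    have h3 : ∀ k, 0 ≤ A i k * p k := by
      intro k
      apply mul_nonneg _ (hp0 k)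
      simp [hAdef, SimpleGraph.adjMatrix]
      positivity
    have h4 : A i j * p j ≤ ∑ k, A i k * p k :=
      Finset.single_le_sum (fun k _ => h3 k) (Finset.mem_univ j)
    have h5 : A i j = 1 := by simp [hAdef, hij]
    rw [h5, one_mul] at h4
    rw [h2] at h1
    have h6 : 0 < lam * p i := (hppos j).trans_le (h4.trans_eq h1)
    nlinarith [hppos i]
  -- tau < 0
  have htauneg : tau < 0 := by
    obtain ⟨i, j, hij⟩ := hedge
    set y : V → ℝ := fun k => if k = i then 1 else if k = j then -1 else 0 with hy
    have hne : i ≠ j := G.ne_of_adj hij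
    have hyy : ∑ k, y k * y k = 2 := by
      rw [Finset.sum_eq_add_of_mem i j (Finset.mem_univ i) (Finset.mem_univ j) hne]
      · simp [hy, hne.symm]; norm_num
      · intro k _ hk
        simp [hy, hk.1, hk.2]
    have hAy : ∀ k, A.mulVec y k = A k i - A k j := by
      intro k
      have : A.mulVec y k = ∑ l, A k l * y l := by
        simp [Matrix.mulVec, dotProduct]
      rw [this, Finset.sum_eq_add_of_mem i j (Finset.mem_univ i) (Finset.mem_univ j) hne]
      · simp [hy, hne.symm]; ring
      · intro k' _ hk'
        simp [hy, hk'.1, hk'.2]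
    have hQy : ∑ k, y k * A.mulVec y k = -2 := by
      rw [Finset.sum_eq_add_of_mem i j (Finset.mem_univ i) (Finset.mem_univ j) hne]
      · rw [hAy i, hAy j]
        simp [hy, hne.symm, hAdef, hij, G.adj_comm]
        norm_num
      · intro k _ hk
        simp [hy, hk.1, hk.2]
    have hr := rayleigh_min' A hA y
    rw [hyy, hQy] at hr
    linarith
  -- obtain a maximum stable set
  set n := stabilityNumber G with hn
  have hmem : n ∈ {m : ℕ | ∃ S : Finset V, IsStableSet G S ∧ S.card = m} := by
    apply Nat.sSup_mem
    · exact ⟨0, ∅, fun i hi => absurd hi (Finset.notMem_empty i), Finset.card_empty⟩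
    · exact ⟨Fintype.card V, fun m ⟨S, _, hc⟩ => hc ▸ Finset.card_le_univ S⟩
  obtain ⟨S, hSstab, hScard⟩ := hmem
  set x : V → ℝ := fun i => if i ∈ S then 1 else 0 with hx
  set c : ℝ := ∑ i ∈ S, p i with hc
  have hpp : ∑ i, p i * p i = 1 := by
    rw [← hpnorm]; exact Finset.sum_congr rfl fun i _ => (sq (p i)).symm
  have hxx : ∑ i, x i * x i = (n : ℝ) := by
    rw [← hScard]
    rw [Finset.sum_congr rfl (fun i (_ : i ∈ Finset.univ) => show x i * x i = if i ∈ S then (1:ℝ) else 0 by by_cases h : i ∈ S <;> simp [hx, h])]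
    simp
  have hxp : ∑ i, x i * p i = c := by
    rw [hc]
    rw [Finset.sum_congr rfl (fun i (_ : i ∈ Finset.univ) => show x i * p i = if i ∈ S then p i else 0 by by_cases h : i ∈ S <;> simp [hx, h])]
    simp
  have hpx : ∑ i, p i * x i = c := by
    rw [← hxp]; exact Finset.sum_congr rfl fun i _ => mul_comm _ _
  have hQx : ∑ i, x i * A.mulVec x i = 0 := by
    apply Finset.sum_eq_zero
    intro i _
    by_cases hi : i ∈ S
    · have : A.mulVec x i = ∑ k, A i k * x k := by
        simp [Matrix.mulVec, dotProduct]
      rw [this]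
      have hz : ∀ k ∈ Finset.univ, A i k * x k = 0 := by
        intro k _
        by_cases hk : k ∈ S
        · have : A i k = 0 := by simp [hAdef]; exact hSstab i hi k hk
          rw [this, zero_mul]
        · simp [hx, hk]
      rw [Finset.sum_eq_zero hz, mul_zero]
    · simp [hx, hi]
  have hAp : ∀ i, A.mulVec p i = lam * p i := by
    intro i; rw [hpe]; simp
  have hxAp : ∑ i, x i * A.mulVec p i = lam * c := by
    rw [← hxp, Finset.mul_sum]
    exact Finset.sum_congr rfl fun i _ => by rw [hAp i]; ring
  have hpAx : ∑ i, p i * A.mulVec x i = lam * c := by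
    rw [dotsym' A hA p x, ← hpx, Finset.mul_sum]
    exact Finset.sum_congr rfl fun i _ => by rw [hAp i]; ring
  have hpAp : ∑ i, p i * A.mulVec p i = lam := by
    have hterm : ∀ i ∈ Finset.univ, p i * A.mulVec p i = lam * (p i * p i) :=
      fun i _ => by rw [hAp i]; ring
    rw [Finset.sum_congr rfl hterm, ← Finset.mul_sum, hpp, mul_one]
  set y : V → ℝ := x - c • p with hy
  have hyi : ∀ i, y i = x i - c * p i := fun i => rfl
  have hAyi : ∀ i, A.mulVec y i = A.mulVec x i - c * A.mulVec p i := by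
    intro i
    rw [hy, Matrix.mulVec_sub, Matrix.mulVec_smul]
    simp
  have hQy : ∑ i, y i * A.mulVec y i = - lam * c^2 := by
    have hterm : ∀ i ∈ Finset.univ, y i * A.mulVec y i =
        x i * A.mulVec x i - c * (x i * A.mulVec p i) - c * (p i * A.mulVec x i)
          + c^2 * (p i * A.mulVec p i) := by
      intro i _
      rw [hyi i, hAyi i]; ring
    rw [Finset.sum_congr rfl hterm]
    simp only [Finset.sum_add_distrib, Finset.sum_sub_distrib, ← Finset.mul_sum]
    rw [hQx, hxAp, hpAx, hpAp]
    ring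
  have hyy : ∑ i, y i * y i = (n : ℝ) - c^2 := by
    have hterm : ∀ i ∈ Finset.univ, y i * y i =
        x i * x i - 2 * c * (x i * p i) + c^2 * (p i * p i) := by
      intro i _
      rw [hyi i]; ring
    rw [Finset.sum_congr rfl hterm]
    simp only [Finset.sum_add_distrib, Finset.sum_sub_distrib, ← Finset.mul_sum]
    rw [hxx, hxp, hpp]
    ring
  have hray := rayleigh_min' A hA y
  rw [hyy, hQy] at hray
  -- minimum entry of p
  obtain ⟨i0, -, hi0⟩ := Finset.exists_min_image Finset.univ p ⟨Classical.arbitrary V, Finset.mem_univ _⟩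
  set m : ℝ := p i0 with hm
  have hmpos : 0 < m := hppos i0
  have hcnm : (n : ℝ) * m ≤ c := by
    rw [hc, ← hScard]
    calc (S.card : ℝ) * m = ∑ _i ∈ S, m := by rw [Finset.sum_const, nsmul_eq_mul]
      _ ≤ ∑ i ∈ S, p i := Finset.sum_le_sum fun i _ => hi0 i (Finset.mem_univ i)
  have hcnn : (0 : ℝ) ≤ c := le_trans (by positivity) hcnm
  set D : ℝ := 1 - lam / tau with hD
  have hDpos : 0 < D := by
    have : lam / tau < 0 := div_neg_of_pos_of_neg hlampos htauneg
    rw [hD]; linarith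
  have h7 : tau * n ≤ (tau - lam) * c^2 := by nlinarith [hray]
  have h8 : D * c^2 ≤ (n : ℝ) := by
    have hDeq : D = (tau - lam) / tau := by
      rw [hD, sub_div, div_self (ne_of_lt htauneg)]
    rw [hDeq, div_mul_eq_mul_div, div_le_iff_of_neg htauneg]
    calc (n : ℝ) * tau = tau * n := mul_comm _ _
      _ ≤ (tau - lam) * c^2 := h7
  have hnm0 : (0 : ℝ) ≤ (n : ℝ) * m := by positivity
  have h9 : ((n : ℝ) * m)^2 ≤ c^2 := by nlinarith [hcnm, hnm0]
  have h10 : D * ((n : ℝ) * m)^2 ≤ (n : ℝ) :=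
    le_trans (mul_le_mul_of_nonneg_left h9 hDpos.le) h8
  have hsup : (m^2)⁻¹ ≤ ⨆ i, (p i ^ 2)⁻¹ :=
    le_ciSup (f := fun i => (p i ^ 2)⁻¹) (Set.Finite.bddAbove (Set.finite_range _)) i0
  clear_value n m D lam tau
  rcases Nat.eq_zero_or_pos n with hn0 | hn0
  · simp only [hn0, Nat.cast_zero]
    apply div_nonneg _ hDpos.le
    exact le_trans (by positivity) hsup
  · have hnpos : (0 : ℝ) < n := by exact_mod_cast hn0
    exact arith_final (n : ℝ) D m _ hnpos hDpos hmpos h10 hsup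
end

section
/- Let G = (V,E) be a finite simple graph and let A ∈ 𝒜_G be a nonnegative generalized adjacency matrix of G (all entries of A are ≥ 0). Then, for every w ∈ ℝ₊^V, ℓ(A,w) = Υ(A,w). -/
open scoped BigOperators Pointwise

variable {V : Type*} [Fintype V] [DecidableEq V]

/- ========= Auxiliary lemmas for the proof of `luz_eq_upsilon` ========= -/

section LuzAux

open Matrix

set_option linter.unusedSectionVars false
set_option linter.unusedVariables false

lemma dot_transpose (M : Matrix V V ℝ) (x y : V → ℝ) :
    x ⬝ᵥ (Mᵀ *ᵥ y) = (M *ᵥ x) ⬝ᵥ y := by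
  rw [Matrix.dotProduct_mulVec, Matrix.vecMul_transpose]

lemma dot_self_nonneg' (x : V → ℝ) : 0 ≤ x ⬝ᵥ x :=
  Finset.sum_nonneg fun i _ => mul_self_nonneg _

lemma dot_CS (x y : V → ℝ) : (x ⬝ᵥ y)^2 ≤ (x ⬝ᵥ x) * (y ⬝ᵥ y) := by
  simpa [dotProduct, sq] using Finset.sum_mul_sq_le_sq_mul_sq Finset.univ x y

lemma pi_star_trivial (x : V → ℝ) : star x = x := funext fun _ => rfl

lemma herm_entries {M : Matrix V V ℝ} (hM : M.IsHermitian) : ∀ i j, M i j = M j i := by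
  intro i j
  conv_lhs => rw [← hM]
  simp [Matrix.conjTranspose_apply]

lemma herm_transpose {M : Matrix V V ℝ} (hM : M.IsHermitian) : Mᵀ = M := by
  ext i j
  rw [Matrix.transpose_apply]
  exact herm_entries hM j i

lemma spectrumSet_eq_range {M : Matrix V V ℝ} (hM : M.IsHermitian) :
    spectrumSet M = Set.range hM.eigenvalues := by
  ext t
  constructor
  · rintro ⟨x, hx, hMx⟩
    have hsm : (star (hM.eigenvectorUnitary : Matrix V V ℝ)) * hM.eigenvectorUnitary = 1 :=
      Matrix.mem_unitaryGroup_iff'.mp hM.eigenvectorUnitary.2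
    have hms : (hM.eigenvectorUnitary : Matrix V V ℝ) * star (hM.eigenvectorUnitary : Matrix V V ℝ) = 1 :=
      Matrix.mem_unitaryGroup_iff.mp hM.eigenvectorUnitary.2
    set U : Matrix V V ℝ := (hM.eigenvectorUnitary : Matrix V V ℝ) with hU
    set D : Matrix V V ℝ := Matrix.diagonal (RCLike.ofReal ∘ hM.eigenvalues) with hD
    set u : V → ℝ := (star U) *ᵥ x with hu
    have hune : u ≠ 0 := by
      intro h
      apply hx
      have h2 : U *ᵥ u = U *ᵥ 0 := by rw [h]
      rw [hu, Matrix.mulVec_mulVec, hms, Matrix.one_mulVec, Matrix.mulVec_zero] at h2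
      exact h2
    have hkey : star U * M = D * star U := by
      conv_lhs => rw [hM.spectral_theorem, Unitary.conjStarAlgAut_apply]
      simp only [← hU, ← hD, ← Matrix.mul_assoc, hsm, Matrix.one_mul]
    have hdia : D *ᵥ u = t • u := by
      rw [hu, Matrix.mulVec_mulVec, ← hkey, ← Matrix.mulVec_mulVec, hMx, Matrix.mulVec_smul]
    obtain ⟨i, hi⟩ : ∃ i, u i ≠ 0 := Function.ne_iff.mp hune
    refine ⟨i, ?_⟩
    have h3 := congrFun hdia i
    simp only [hD, Matrix.mulVec_diagonal, Function.comp_apply, Pi.smul_apply,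
      smul_eq_mul, RCLike.ofReal_real_eq_id, id_eq] at h3
    exact mul_right_cancel₀ hi h3
  · rintro ⟨i, rfl⟩
    refine ⟨⇑(hM.eigenvectorBasis i), ?_, hM.mulVec_eigenvectorBasis i⟩
    have h1 := hM.eigenvectorBasis.orthonormal.ne_zero i
    intro h
    apply h1
    ext j
    exact congrFun h j

lemma lambdaMin_le' {M : Matrix V V ℝ} (hM : M.IsHermitian) (i : V) :
    lambdaMin M ≤ hM.eigenvalues i := by
  show sInf (spectrumSet M) ≤ hM.eigenvalues i
  apply csInf_le
  · rw [spectrumSet_eq_range hM]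
    exact (Set.finite_range _).bddBelow
  · rw [spectrumSet_eq_range hM]
    exact ⟨i, rfl⟩

lemma quad_eq_sum {M : Matrix V V ℝ} (hM : M.IsHermitian) (v : V → ℝ) :
    v ⬝ᵥ (M *ᵥ v) = ∑ i, hM.eigenvalues i * ((star (hM.eigenvectorUnitary : Matrix V V ℝ) *ᵥ v) i)^2 ∧
    v ⬝ᵥ v = ∑ i, ((star (hM.eigenvectorUnitary : Matrix V V ℝ) *ᵥ v) i)^2 := by
  have hsm : (star (hM.eigenvectorUnitary : Matrix V V ℝ)) * hM.eigenvectorUnitary = 1 :=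
    Matrix.mem_unitaryGroup_iff'.mp hM.eigenvectorUnitary.2
  have hms : (hM.eigenvectorUnitary : Matrix V V ℝ) * star (hM.eigenvectorUnitary : Matrix V V ℝ) = 1 :=
    Matrix.mem_unitaryGroup_iff.mp hM.eigenvectorUnitary.2
  set U : Matrix V V ℝ := (hM.eigenvectorUnitary : Matrix V V ℝ) with hU
  set D : Matrix V V ℝ := Matrix.diagonal (RCLike.ofReal ∘ hM.eigenvalues) with hD
  set u : V → ℝ := (star U) *ᵥ v with hu
  have hstar : star U = Uᵀ := by ext i j; simp [Matrix.star_apply]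
  constructor
  · conv_lhs => rw [hM.spectral_theorem, Unitary.conjStarAlgAut_apply, ← hU, ← hD]
    rw [← Matrix.mulVec_mulVec, ← Matrix.mulVec_mulVec, ← hu]
    rw [show U *ᵥ (D *ᵥ u) = Uᵀᵀ *ᵥ (D *ᵥ u) by rw [Matrix.transpose_transpose]]
    rw [dot_transpose, ← hstar, ← hu]
    simp only [hD, Matrix.mulVec_diagonal, dotProduct, Function.comp_apply,
      RCLike.ofReal_real_eq_id, id_eq]
    exact Finset.sum_congr rfl fun i _ => by ring
  · have hv : v = U *ᵥ u := by rw [hu, Matrix.mulVec_mulVec, hms, Matrix.one_mulVec]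
    conv_lhs => rw [hv]
    rw [show (U *ᵥ u) ⬝ᵥ (U *ᵥ u) = u ⬝ᵥ (Uᵀ *ᵥ (U *ᵥ u)) by rw [dot_transpose]]
    rw [Matrix.mulVec_mulVec, ← hstar, hsm, Matrix.one_mulVec]
    simp [dotProduct, sq]

lemma quad_ge {M : Matrix V V ℝ} (hM : M.IsHermitian) (v : V → ℝ) :
    lambdaMin M * (v ⬝ᵥ v) ≤ v ⬝ᵥ (M *ᵥ v) := by
  obtain ⟨h1, h2⟩ := quad_eq_sum hM v
  rw [h1, h2, Finset.mul_sum]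
  exact Finset.sum_le_sum fun i _ =>
    mul_le_mul_of_nonneg_right (lambdaMin_le' hM i) (sq_nonneg _)

lemma trace_eq_sum_eig {M : Matrix V V ℝ} (hM : M.IsHermitian) :
    M.trace = ∑ i, hM.eigenvalues i := by
  have hsm : (star (hM.eigenvectorUnitary : Matrix V V ℝ)) * hM.eigenvectorUnitary = 1 :=
    Matrix.mem_unitaryGroup_iff'.mp hM.eigenvectorUnitary.2
  conv_lhs => rw [hM.spectral_theorem, Unitary.conjStarAlgAut_apply]
  rw [Matrix.trace_mul_comm, ← Matrix.mul_assoc, hsm, Matrix.one_mul]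
  simp [Matrix.trace, Matrix.diag]

lemma eq_zero_of_eigs_zero {M : Matrix V V ℝ} (hM : M.IsHermitian)
    (h : ∀ i, hM.eigenvalues i = 0) : M = 0 := by
  have hz : Matrix.diagonal (RCLike.ofReal ∘ hM.eigenvalues) = (0 : Matrix V V ℝ) := by
    ext i j; simp [Matrix.diagonal, h]
  rw [hM.spectral_theorem, Unitary.conjStarAlgAut_apply, hz, Matrix.mul_zero, Matrix.zero_mul]

lemma lambdaMin_neg {M : Matrix V V ℝ} (hM : M.IsHermitian)
    (hd : ∀ i, M i i = 0) (hne : M ≠ 0) : lambdaMin M < 0 := by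
  by_contra hcon
  push_neg at hcon
  have heig : ∀ i, 0 ≤ hM.eigenvalues i := fun i => le_trans hcon (lambdaMin_le' hM i)
  have htr : M.trace = 0 := by simp [Matrix.trace, Matrix.diag, hd]
  have hsum : ∑ i, hM.eigenvalues i = 0 := by rw [← trace_eq_sum_eig hM, htr]
  have hz : ∀ i ∈ Finset.univ, hM.eigenvalues i = 0 :=
    (Finset.sum_eq_zero_iff_of_nonneg fun i _ => heig i).mp hsum
  exact hne (eq_zero_of_eigs_zero hM fun i => hz i (Finset.mem_univ i))

/-- If the quadratic forms of `M * Mᵀ` are bounded by those of `1`,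
the same holds for `Mᵀ * M`. -/
lemma transfer (M : Matrix V V ℝ)
    (h : ∀ z, z ⬝ᵥ ((M * Mᵀ) *ᵥ z) ≤ z ⬝ᵥ z) :
    ∀ z, z ⬝ᵥ ((Mᵀ * M) *ᵥ z) ≤ z ⬝ᵥ z := by
  intro z
  have hrw : ∀ (N : Matrix V V ℝ) (x : V → ℝ), x ⬝ᵥ ((Nᵀ * N) *ᵥ x) = (N *ᵥ x) ⬝ᵥ (N *ᵥ x) := by
    intro N x
    rw [← Matrix.mulVec_mulVec, dot_transpose]
  have hkey : ∀ u, (Mᵀ *ᵥ u) ⬝ᵥ (Mᵀ *ᵥ u) ≤ u ⬝ᵥ u := by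
    intro u
    have h2 := h u
    rwa [show M * Mᵀ = Mᵀᵀ * Mᵀ by rw [Matrix.transpose_transpose], hrw] at h2
  rw [hrw]
  set v := M *ᵥ z with hv
  have h1 : v ⬝ᵥ v = z ⬝ᵥ (Mᵀ *ᵥ v) := by rw [dot_transpose, ← hv]
  have h2 : (z ⬝ᵥ (Mᵀ *ᵥ v))^2 ≤ (z ⬝ᵥ z) * (v ⬝ᵥ v) := by
    calc (z ⬝ᵥ (Mᵀ *ᵥ v))^2 ≤ (z ⬝ᵥ z) * ((Mᵀ *ᵥ v) ⬝ᵥ (Mᵀ *ᵥ v)) := dot_CS _ _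
    _ ≤ (z ⬝ᵥ z) * (v ⬝ᵥ v) := mul_le_mul_of_nonneg_left (hkey v) (dot_self_nonneg' z)
  rw [← h1] at h2
  rcases eq_or_lt_of_le (dot_self_nonneg' v) with h0 | h0
  · rw [← h0]; exact dot_self_nonneg' z
  · rw [pow_two] at h2
    exact le_of_mul_le_mul_right h2 h0

/-- Perron-type bound: a symmetric entrywise-nonnegative matrix with a nonnegative
eigenvector for eigenvalue 1, positive wherever the matrix is supported, has form `≤ 1`. -/
lemma perron_bound (N : Matrix V V ℝ) (hsym : ∀ i j, N i j = N j i)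
    (hnn : ∀ i j, 0 ≤ N i j) (u : V → ℝ) (hu : 0 ≤ u)
    (hpos : ∀ i j, N i j ≠ 0 → 0 < u i) (heig : N *ᵥ u = u) :
    ∀ z, z ⬝ᵥ (N *ᵥ z) ≤ z ⬝ᵥ z := by
  intro z
  have hT : ∀ i, (∑ j, N i j * u j * (z i)^2 / u i) ≤ (z i)^2 := by
    intro i
    rcases eq_or_lt_of_le (hu i) with h0 | h0
    · have hzz : ∀ j ∈ Finset.univ, N i j * u j * (z i)^2 / u i = 0 := by
        intro j _
        rw [← h0]; simp
      rw [Finset.sum_eq_zero hzz]; exact sq_nonneg _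
    · have he : (∑ j, N i j * u j * (z i)^2 / u i) = ((z i)^2 / u i) * ∑ j, N i j * u j := by
        rw [Finset.mul_sum]
        exact Finset.sum_congr rfl fun j _ => by field_simp
      rw [he, show (∑ j, N i j * u j) = u i from congrFun heig i]
      rw [div_mul_cancel₀ _ (ne_of_gt h0)]
  have hterm : ∀ i j, z i * (N i j * z j) ≤
      (N i j * u j * (z i)^2 / u i + N j i * u i * (z j)^2 / u j) / 2 := by
    intro i j
    rcases eq_or_ne (N i j) 0 with h0 | h0
    · rw [h0, hsym j i, h0]; simp
    · have hui : 0 < u i := hpos i j h0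
      have huj : 0 < u j := hpos j i (by rw [hsym j i]; exact h0)
      rw [hsym j i]
      have key : 2 * (z i * z j) * (u i * u j) ≤ (u j * z i)^2 + (u i * z j)^2 := by
        have h2 := two_mul_le_add_sq (u j * z i) (u i * z j)
        calc 2 * (z i * z j) * (u i * u j) = 2 * (u j * z i) * (u i * z j) := by ring
        _ ≤ (u j * z i)^2 + (u i * z j)^2 := h2
      rw [div_add_div _ _ (ne_of_gt hui) (ne_of_gt huj), div_div,
        le_div_iff₀ (by positivity)]
      nlinarith [mul_le_mul_of_nonneg_left key (hnn i j)]
  have half : ∀ (T : V → V → ℝ), ∑ i, ∑ j, (T i j + T j i)/2 = ∑ i, ∑ j, T i j := by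
    intro T
    have h1 : ∑ i, ∑ j, (T i j + T j i)/2
        = (∑ i, ∑ j, T i j)/2 + (∑ i, ∑ j, T j i)/2 := by
      simp [add_div, Finset.sum_add_distrib, Finset.sum_div]
    have h2 : ∑ i : V, ∑ j : V, T j i = ∑ i : V, ∑ j : V, T i j := Finset.sum_comm
    rw [h1, h2, add_halves]
  have expand : z ⬝ᵥ (N *ᵥ z) = ∑ i, ∑ j, z i * (N i j * z j) := by
    simp [dotProduct, Matrix.mulVec, Finset.mul_sum]
  calc z ⬝ᵥ (N *ᵥ z) = ∑ i, ∑ j, z i * (N i j * z j) := expand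
    _ ≤ ∑ i, ∑ j, (N i j * u j * (z i)^2 / u i + N j i * u i * (z j)^2 / u j)/2 :=
        Finset.sum_le_sum fun i _ => Finset.sum_le_sum fun j _ => hterm i j
    _ = ∑ i, ∑ j, N i j * u j * (z i)^2 / u i :=
        half (fun i j => N i j * u j * (z i)^2 / u i)
    _ ≤ ∑ i, (z i)^2 := Finset.sum_le_sum fun i _ => hT i
    _ = z ⬝ᵥ z := by simp [dotProduct, sq]

lemma mulVec_entry_ge (B : Matrix V V ℝ) (hBnn : ∀ i j, 0 ≤ B i j) (q : V → ℝ)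
    (hq : 0 ≤ q) (i : V) : B i i * q i ≤ (B *ᵥ q) i :=
  Finset.single_le_sum (f := fun j => B i j * q j)
    (fun j _ => mul_nonneg (hBnn i j) (hq j)) (Finset.mem_univ i)

lemma g_shift (B : Matrix V V ℝ) (hBsym : ∀ i j, B i j = B j i) (hBd : ∀ i, B i i = 1)
    (s q : V → ℝ) (t : ℝ) (i : V) :
    2*(s ⬝ᵥ (q + t • (Pi.single i 1 : V → ℝ))) -
      (q + t • (Pi.single i 1 : V → ℝ)) ⬝ᵥ (B *ᵥ (q + t • (Pi.single i 1 : V → ℝ)))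
      = (2*(s ⬝ᵥ q) - q ⬝ᵥ (B *ᵥ q)) + 2*t*(s i) - 2*t*((B *ᵥ q) i) - t^2 := by
  have h1 : s ⬝ᵥ (q + t • (Pi.single i 1 : V → ℝ)) = s ⬝ᵥ q + t * s i := by
    rw [dotProduct_add, dotProduct_smul, dotProduct_single]
    simp [smul_eq_mul, mul_comm]
  have hBm : B *ᵥ (t • (Pi.single i 1 : V → ℝ)) = t • fun k => B k i := by
    rw [Matrix.mulVec_smul]
    congr 1
    ext k
    rw [Matrix.mulVec_single]
    simp
  have h2 : (q + t • (Pi.single i 1 : V → ℝ)) ⬝ᵥ (B *ᵥ (q + t • (Pi.single i 1 : V → ℝ)))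
      = q ⬝ᵥ (B *ᵥ q) + 2*t*((B *ᵥ q) i) + t^2 := by
    rw [Matrix.mulVec_add, dotProduct_add, add_dotProduct,
      add_dotProduct, hBm]
    have e1 : q ⬝ᵥ (t • fun k => B k i) = t * ((B *ᵥ q) i) := by
      rw [dotProduct_smul]
      simp only [smul_eq_mul]
      congr 1
      simp only [dotProduct, Matrix.mulVec]
      exact Finset.sum_congr rfl fun k _ => by rw [hBsym k i]; ring
    have e2 : (t • (Pi.single i 1 : V → ℝ)) ⬝ᵥ (B *ᵥ q) = t * ((B *ᵥ q) i) := by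
      rw [smul_dotProduct, single_dotProduct]
      simp
    have e3 : (t • (Pi.single i 1 : V → ℝ)) ⬝ᵥ (t • fun k => B k i) = t^2 := by
      rw [smul_dotProduct, dotProduct_smul, single_dotProduct]
      simp [hBd i, sq, smul_eq_mul]
    rw [e1, e2, e3]
    ring
  rw [h1, h2]
  ring

lemma exists_kkt (B : Matrix V V ℝ) (hBsym : ∀ i j, B i j = B j i)
    (hBnn : ∀ i j, 0 ≤ B i j) (hBd : ∀ i, B i i = 1) (s : V → ℝ) (hs : 0 ≤ s) :
    ∃ q : V → ℝ, 0 ≤ q ∧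
      (∀ x : V → ℝ, 0 ≤ x → 2*(s ⬝ᵥ x) - x ⬝ᵥ (B *ᵥ x) ≤ 2*(s ⬝ᵥ q) - q ⬝ᵥ (B *ᵥ q)) ∧
      (∀ i, 0 < q i → (B *ᵥ q) i = s i) ∧ (∀ i, 0 < q i → 0 < s i) := by
  set g : (V → ℝ) → ℝ := fun x => 2*(s ⬝ᵥ x) - x ⬝ᵥ (B *ᵥ x) with hg
  have hcont : Continuous g := by
    apply Continuous.sub
    · apply continuous_const.mul
      exact continuous_finset_sum _ fun i _ => continuous_const.mul (continuous_apply i)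
    · exact continuous_finset_sum _ fun i _ => (continuous_apply i).mul
        (continuous_finset_sum _ fun j _ => continuous_const.mul (continuous_apply j))
  set c : ℝ := 2*Real.sqrt (s ⬝ᵥ s) + 1 with hc
  have hc0 : (0:ℝ) ≤ c := by positivity
  have h0K : (0 : V → ℝ) ∈ Set.Icc (0 : V → ℝ) (fun _ => c) :=
    ⟨le_refl _, fun i => hc0⟩
  obtain ⟨q, hqK, hqmax⟩ := (isCompact_Icc (a := (0:V→ℝ)) (b := fun _ => c)).exists_isMaxOn
    ⟨0, h0K⟩ hcont.continuousOn
  have hq0 : 0 ≤ q := hqK.1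
  have hglob : ∀ x : V → ℝ, 0 ≤ x → g x ≤ g q := by
    intro x hx
    by_cases hxK : x ∈ Set.Icc (0 : V → ℝ) (fun _ => c)
    · exact hqmax hxK
    · obtain ⟨i, hi⟩ : ∃ i, c < x i := by
        by_contra hcon
        push_neg at hcon
        exact hxK ⟨hx, fun i => hcon i⟩
      have hxx : x ⬝ᵥ x ≤ x ⬝ᵥ (B *ᵥ x) := by
        apply Finset.sum_le_sum
        intro k _
        have hk := mulVec_entry_ge B hBnn x hx k
        rw [hBd k, one_mul] at hk
        exact mul_le_mul_of_nonneg_left hk (hx k)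
      have hsi : s i ≤ Real.sqrt (s ⬝ᵥ s) := by
        rw [show s i = Real.sqrt ((s i)^2) from (Real.sqrt_sq (hs i)).symm]
        apply Real.sqrt_le_sqrt
        exact Finset.single_le_sum (f := fun k => s k * s k)
          (fun k _ => mul_self_nonneg _) (Finset.mem_univ i) |>.trans_eq' (by rw [sq])
      have hbig : s ⬝ᵥ s < (x i - s i)^2 := by
        have h1 : Real.sqrt (s ⬝ᵥ s) + 1 ≤ x i - s i := by
          have h1' := hi; rw [hc] at h1'; linarith
        have h2 : (Real.sqrt (s ⬝ᵥ s) + 1)^2 ≤ (x i - s i)^2 := by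
          apply sq_le_sq' <;> nlinarith [Real.sqrt_nonneg (s ⬝ᵥ s)]
        have h3 : s ⬝ᵥ s < (Real.sqrt (s ⬝ᵥ s) + 1)^2 := by
          nlinarith [Real.sq_sqrt (dot_self_nonneg' s), Real.sqrt_nonneg (s ⬝ᵥ s)]
        linarith
      have hgx : g x < 0 := by
        have h1 : g x ≤ 2*(s ⬝ᵥ x) - x ⬝ᵥ x := by rw [hg]; simp only; linarith
        have h2 : 2*(s ⬝ᵥ x) - x ⬝ᵥ x = s ⬝ᵥ s - ∑ k, (x k - s k)^2 := by
          simp only [dotProduct, Finset.mul_sum, ← Finset.sum_sub_distrib]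
          exact Finset.sum_congr rfl fun k _ => by ring
        have h3 : (x i - s i)^2 ≤ ∑ k, (x k - s k)^2 :=
          Finset.single_le_sum (f := fun k => (x k - s k)^2)
            (fun k _ => sq_nonneg _) (Finset.mem_univ i)
        linarith
      have hg0 : g 0 = 0 := by simp [hg]
      have h00 : g 0 ≤ g q := hqmax h0K
      linarith
  have hkkt : ∀ i, 0 < q i → (B *ᵥ q) i = s i := by
    intro i hqi
    by_contra hne
    set d : ℝ := s i - (B *ᵥ q) i with hd
    have hdne : d ≠ 0 := fun h => hne (by rw [hd] at h; linarith)
    rcases lt_or_gt_of_ne hdne with hdneg | hdpos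
    · set t : ℝ := max d (-(q i)) with ht
      have htneg : t < 0 := max_lt hdneg (neg_neg_iff_pos.mpr hqi)
      have htd : d ≤ t := le_max_left _ _
      have hxnn : 0 ≤ q + t • (Pi.single i 1 : V → ℝ) := by
        intro j
        simp only [Pi.add_apply, Pi.smul_apply, smul_eq_mul, Pi.zero_apply]
        rcases eq_or_ne i j with rfl | hij
        · simp only [Pi.single_eq_same, mul_one]
          have hm : -(q i) ≤ t := le_max_right _ _
          linarith
        · rw [Pi.single_eq_of_ne (Ne.symm hij)]
          simpa using hq0 j
      have hineq := hglob _ hxnn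
      simp only [hg] at hineq
      rw [g_shift B hBsym hBd s q t i] at hineq
      have hfact : 0 < t * (2*d - t) := by
        apply mul_pos_of_neg_of_neg htneg
        linarith
      nlinarith
    · have hxnn : 0 ≤ q + d • (Pi.single i 1 : V → ℝ) := by
        intro j
        simp only [Pi.add_apply, Pi.smul_apply, smul_eq_mul, Pi.zero_apply]
        rcases eq_or_ne i j with rfl | hij
        · simp only [Pi.single_eq_same, mul_one]; linarith [hq0 i]
        · rw [Pi.single_eq_of_ne (Ne.symm hij)]
          simpa using hq0 j
      have hineq := hglob _ hxnn
      simp only [hg] at hineq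
      rw [g_shift B hBsym hBd s q d i] at hineq
      nlinarith
  refine ⟨q, hq0, hglob, hkkt, ?_⟩
  intro i hqi
  rcases lt_or_eq_of_le (show (0:ℝ) ≤ s i from hs i) with h | h
  · exact h
  · exfalso
    have h1 := hkkt i hqi
    have h2 := mulVec_entry_ge B hBnn q hq0 i
    rw [hBd i, one_mul, h1, ← h] at h2
    linarith

open scoped MatrixOrder in
lemma psdSqrt_of {M : Matrix V V ℝ} (h : M.PosSemidef) : psdSqrt M = CFC.sqrt M := by
  rw [CFC.sqrt_eq_real_sqrt M h.nonneg, cfcₙ_eq_cfc, Matrix.IsHermitian.cfc_eq h.1,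
    Matrix.IsHermitian.cfc, Unitary.conjStarAlgAut_apply]
  simp only [psdSqrt]
  rw [dif_pos h]
  rfl

open scoped MatrixOrder in
lemma psdSqrt_mul_self' {M : Matrix V V ℝ} (h : M.PosSemidef) : psdSqrt M * psdSqrt M = M := by
  rw [psdSqrt_of h]; exact CFC.sqrt_mul_sqrt_self M h.nonneg

open scoped MatrixOrder in
lemma psdSqrt_herm' {M : Matrix V V ℝ} (h : M.PosSemidef) : (psdSqrt M).IsHermitian := by
  rw [psdSqrt_of h]; exact (CFC.sqrt_nonneg M).posSemidef.1

open scoped MatrixOrder in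
lemma psdSqrt_unique' {M N : Matrix V V ℝ} (h : M.PosSemidef) (hN : N.PosSemidef)
    (hNN : N ^ 2 = M) : psdSqrt M = N := by
  rw [psdSqrt_of h]; exact CFC.sqrt_unique (by rw [← hNN, sq]) hN.nonneg

lemma B_facts {A : Matrix V V ℝ} (hH : A.IsHermitian) (hd : ∀ i, A i i = 0)
    (hpos : ∀ i j, 0 ≤ A i j) :
    (∀ i j, (1 + hatM A) i j = (1 + hatM A) j i) ∧ (∀ i j, 0 ≤ (1 + hatM A) i j) ∧
    (∀ i, (1 + hatM A) i i = 1) ∧ (1 + hatM A).PosSemidef := by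
  by_cases h0 : A = 0
  · have hh : hatM A = 0 := by rw [hatM, if_pos h0]
    rw [hh, add_zero]
    refine ⟨fun i j => ?_, fun i j => ?_, fun i => ?_, ?_⟩
    · simp [Matrix.one_apply]; split <;> split <;> simp_all
    · simp [Matrix.one_apply]; split <;> simp
    · simp
    · exact Matrix.PosSemidef.of_dotProduct_mulVec_nonneg Matrix.isHermitian_one fun x => by
        rw [Matrix.one_mulVec, pi_star_trivial]
        exact dot_self_nonneg' x
  · have hlam : lambdaMin A < 0 := lambdaMin_neg hH hd h0
    have hc : 0 < (-(lambdaMin A))⁻¹ := by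
      apply inv_pos.mpr; linarith
    have hh : hatM A = (-(lambdaMin A))⁻¹ • A := by rw [hatM, if_neg h0]
    have hsA : ∀ i j, A i j = A j i := herm_entries hH
    refine ⟨fun i j => ?_, fun i j => ?_, fun i => ?_, ?_⟩
    · simp only [hh, Matrix.add_apply, Matrix.smul_apply, smul_eq_mul]
      rw [hsA i j, Matrix.one_apply, Matrix.one_apply]
      by_cases hij : i = j <;> simp [hij, eq_comm]
    · simp only [hh, Matrix.add_apply, Matrix.smul_apply, smul_eq_mul]
      have h1 : (0:ℝ) ≤ (1 : Matrix V V ℝ) i j := by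
        rw [Matrix.one_apply]; split <;> norm_num
      have h2 : (0:ℝ) ≤ (-(lambdaMin A))⁻¹ * A i j := mul_nonneg (le_of_lt hc) (hpos i j)
      linarith
    · simp only [hh, Matrix.add_apply, Matrix.smul_apply, smul_eq_mul, hd i,
        Matrix.one_apply_eq, mul_zero, add_zero]
    · refine Matrix.PosSemidef.of_dotProduct_mulVec_nonneg ?_ ?_
      · apply Matrix.isHermitian_one.add
        rw [hh]
        ext i j
        rw [Matrix.conjTranspose_apply, star_trivial, Matrix.smul_apply,
          Matrix.smul_apply, hsA j i]
      · intro x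
        rw [pi_star_trivial, Matrix.add_mulVec, Matrix.one_mulVec, dotProduct_add, hh,
          Matrix.smul_mulVec, dotProduct_smul, smul_eq_mul]
        have hq := quad_ge hH x
        have hx2 : 0 ≤ x ⬝ᵥ x := dot_self_nonneg' x
        have hcl : (-(lambdaMin A))⁻¹ * lambdaMin A = -1 := by
          field_simp
          rw [div_self (ne_of_lt hlam)]
        nlinarith [mul_le_mul_of_nonneg_left hq (le_of_lt hc)]



/-- for a nonnegative generalized adjacency matrix `A` of `G`,
`ℓ(A,w) = Υ(A,w)` for every `w ≥ 0`. -/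
theorem luz_eq_upsilon (G : SimpleGraph V) (A : Matrix V V ℝ)
    (hA : IsGenAdj G A) (hpos : ∀ i j, 0 ≤ A i j)
    (w : V → ℝ) (hw : 0 ≤ w) :
    luzE A w = (upsilon A w : EReal) := by
  classical
  have hAd : ∀ i, A i i = 0 := fun i => hA.2 i i (G.irrefl)
  have hH : A.IsHermitian := by
    ext i j
    rw [Matrix.conjTranspose_apply, star_trivial]
    exact hA.1.apply i j
  obtain ⟨hBsym, hBnn, hBd, hBpsd⟩ := B_facts hH hAd hpos
  set B : Matrix V V ℝ := 1 + hatM A with hB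
  set S : Matrix V V ℝ := psdSqrt B with hSdef
  have hSS : S * S = B := by rw [hSdef]; exact psdSqrt_mul_self' hBpsd
  have hSherm : S.IsHermitian := by
    rw [hSdef]; exact psdSqrt_herm' hBpsd
  have hSH : Sᴴ = S := hSherm
  have hST : Sᵀ = S := herm_transpose hSherm
  set s : V → ℝ := fun i => Real.sqrt (w i) with hsdef
  have hs : 0 ≤ s := fun i => Real.sqrt_nonneg _
  have hws : ∀ i, s i * s i = w i := fun i => Real.mul_self_sqrt (hw i)
  have hdw : (Matrix.diagonal w).PosSemidef := .diagonal hw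
  have hds : (Matrix.diagonal s).PosSemidef := .diagonal hs
  have hsq : Matrix.diagonal s ^ 2 = Matrix.diagonal w := by
    rw [pow_two, Matrix.diagonal_mul_diagonal,
      show (fun i => s i * s i) = w from funext hws]
  have hW : psdSqrt (Matrix.diagonal w) = Matrix.diagonal s := by
    exact psdSqrt_unique' hdw hds hsq
  have hip : ∀ x : V → ℝ, ip w x = s ⬝ᵥ (fun i => s i * x i) := by
    intro x
    rw [ip, dotProduct]
    exact Finset.sum_congr rfl fun i _ => by rw [← hws i]; ring
  have hobj : ∀ x : V → ℝ, luzObj A w x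
      = 2*(s ⬝ᵥ (fun i => s i * x i)) - (fun i => s i * x i) ⬝ᵥ (B *ᵥ (fun i => s i * x i)) := by
    intro x
    simp only [luzObj, hW, ← hB]
    have h2 : (Matrix.diagonal s * B * Matrix.diagonal s) *ᵥ x
        = fun i => s i * ((B *ᵥ (fun j => s j * x j)) i) := by
      rw [← Matrix.mulVec_mulVec, ← Matrix.mulVec_mulVec,
        show Matrix.diagonal s *ᵥ x = fun j => s j * x j from
          funext fun j => Matrix.mulVec_diagonal _ _ _]
      funext i
      rw [Matrix.mulVec_diagonal]
    rw [hip x, h2]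
    have h3 : ∑ i, x i * (s i * ((B *ᵥ (fun j => s j * x j)) i))
        = (fun i => s i * x i) ⬝ᵥ (B *ᵥ (fun j => s j * x j)) := by
      rw [dotProduct]
      exact Finset.sum_congr rfl fun i _ => by ring
    rw [h3]
  -- the KKT point
  obtain ⟨q₀, hq₀0, hglob, hkkt, hqs⟩ := exists_kkt B hBsym hBnn hBd s hs
  have hq₀0' : ∀ i, (0:ℝ) ≤ q₀ i := fun i => hq₀0 i
  set y₀ : V → ℝ := fun i => q₀ i / s i with hy₀
  have hy₀0 : 0 ≤ y₀ := fun i => div_nonneg (hq₀0 i) (hs i)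
  have hsy : ∀ i, s i * y₀ i = q₀ i := by
    intro i
    rcases eq_or_lt_of_le (hq₀0' i) with h | h
    · simp only [hy₀, ← h, zero_div, mul_zero]
    · have hsi := hqs i h
      simp only [hy₀]
      field_simp
  -- feasibility of y₀
  set E : Matrix V V ℝ := Matrix.diagonal (fun i => Real.sqrt (y₀ i)) with hE
  have hEt : Eᵀ = E := by rw [hE, Matrix.diagonal_transpose]
  set u : V → ℝ := fun i => Real.sqrt (q₀ i * s i) with hu
  set N : Matrix V V ℝ := E * B * E with hN
  have hEntry : ∀ i j, N i j = Real.sqrt (y₀ i) * B i j * Real.sqrt (y₀ j) := by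
    intro i j
    rw [hN, hE, Matrix.mul_diagonal, Matrix.diagonal_mul]
  have hy₀pos : ∀ i, y₀ i ≠ 0 → 0 < q₀ i ∧ 0 < s i := by
    intro i hy
    rcases eq_or_lt_of_le (hq₀0' i) with h | h
    · exact absurd (by simp only [hy₀, ← h, zero_div]) hy
    · exact ⟨h, hqs i h⟩
  have hNsym : ∀ i j, N i j = N j i := by
    intro i j
    rw [hEntry i j, hEntry j i, hBsym i j]
    ring
  have hNnn : ∀ i j, 0 ≤ N i j := by
    intro i j
    rw [hEntry i j]
    exact mul_nonneg (mul_nonneg (Real.sqrt_nonneg _) (hBnn i j)) (Real.sqrt_nonneg _)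
  have hu0 : 0 ≤ u := fun i => Real.sqrt_nonneg _
  have hNpos : ∀ i j, N i j ≠ 0 → 0 < u i := by
    intro i j hne
    rw [hEntry i j] at hne
    have hyi : y₀ i ≠ 0 := by
      intro h
      apply hne
      rw [h, Real.sqrt_zero, zero_mul, zero_mul]
    obtain ⟨hq, hsi⟩ := hy₀pos i hyi
    rw [hu]
    exact Real.sqrt_pos.mpr (mul_pos hq hsi)
  have hEu : E *ᵥ u = q₀ := by
    funext j
    rw [hE, Matrix.mulVec_diagonal]
    rcases eq_or_lt_of_le (hq₀0' j) with h | h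
    · have hyj : y₀ j = 0 := by rw [hy₀]; simp [← h]
      simp [hyj, hu, ← h]
    · have hsj := hqs j h
      rw [hu, hy₀]
      simp only
      rw [← Real.sqrt_mul (by positivity)]
      rw [show q₀ j / s j * (q₀ j * s j) = (q₀ j)^2 by field_simp]
      exact Real.sqrt_sq (le_of_lt h)
  have hEBq : E *ᵥ (B *ᵥ q₀) = u := by
    funext i
    rw [hE, Matrix.mulVec_diagonal]
    rcases eq_or_lt_of_le (hq₀0' i) with h | h
    · have hyi : y₀ i = 0 := by rw [hy₀]; simp [← h]
      simp [hyi, hu, ← h]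
    · have hsi := hqs i h
      rw [hkkt i h, hu, hy₀]
      simp only
      rw [show s i = Real.sqrt ((s i)^2) from (Real.sqrt_sq (le_of_lt hsi)).symm,
        ← Real.sqrt_mul (by positivity)]
      congr 1
      field_simp
      exact (Real.sq_sqrt (sq_nonneg _)).symm
  have heig : N *ᵥ u = u := by
    rw [hN, ← Matrix.mulVec_mulVec, ← Matrix.mulVec_mulVec, hEu, hEBq]
  have hNform := perron_bound N hNsym hNnn u hu0 hNpos heig
  have hMMt : (E * S) * (E * S)ᵀ = N := by
    rw [Matrix.transpose_mul, hST, hEt]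
    calc (E * S) * (S * E) = E * (S * (S * E)) := by rw [Matrix.mul_assoc]
    _ = E * ((S * S) * E) := by rw [Matrix.mul_assoc]
    _ = E * (B * E) := by rw [hSS]
    _ = N := by rw [hN, Matrix.mul_assoc]
  have hEE : E * E = Matrix.diagonal y₀ := by
    rw [hE, Matrix.diagonal_mul_diagonal,
      show (fun i => Real.sqrt (y₀ i) * Real.sqrt (y₀ i)) = y₀ from
        funext fun i => Real.mul_self_sqrt (hy₀0 i)]
  have hMtM : (E * S)ᵀ * (E * S) = S * Matrix.diagonal y₀ * S := by
    rw [Matrix.transpose_mul, hST, hEt]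
    calc (S * E) * (E * S) = S * ((E * E) * S) := by
          rw [Matrix.mul_assoc, Matrix.mul_assoc]
    _ = S * (Matrix.diagonal y₀ * S) := by rw [hEE]
    _ = S * Matrix.diagonal y₀ * S := by rw [Matrix.mul_assoc]
  have hformy : ∀ z, z ⬝ᵥ ((S * Matrix.diagonal y₀ * S) *ᵥ z) ≤ z ⬝ᵥ z := by
    intro z
    have ht := transfer (E * S) (fun z' => by rw [hMMt]; exact hNform z') z
    rwa [hMtM] at ht
  have hy₀mem : y₀ ∈ Uset A := by
    refine ⟨hy₀0, ?_⟩
    rw [← hB, ← hSdef]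
    have hPSD : (S * Matrix.diagonal y₀ * S).PosSemidef := by
      have hp := (Matrix.PosSemidef.diagonal hy₀0).mul_mul_conjTranspose_same S
      rwa [hSH] at hp
    refine Matrix.PosSemidef.of_dotProduct_mulVec_nonneg (Matrix.isHermitian_one.sub hPSD.1) ?_
    intro z
    rw [pi_star_trivial, Matrix.sub_mulVec, dotProduct_sub, Matrix.one_mulVec]
    have := hformy z
    linarith
  -- lower bound : ip w x ≤ luzObj for feasible x
  have hlb : ∀ x, x ∈ Uset A → ip w x ≤ luzObj A w x := by
    rintro x ⟨hx0, hxP⟩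
    rw [← hB, ← hSdef] at hxP
    have hformx : ∀ z, z ⬝ᵥ ((S * Matrix.diagonal x * S) *ᵥ z) ≤ z ⬝ᵥ z := by
      intro z
      have h2 := hxP.dotProduct_mulVec_nonneg z
      rw [pi_star_trivial, Matrix.sub_mulVec, dotProduct_sub, Matrix.one_mulVec] at h2
      linarith
    set Ex : Matrix V V ℝ := Matrix.diagonal (fun i => Real.sqrt (x i)) with hEx
    have hExt : Exᵀ = Ex := by rw [hEx, Matrix.diagonal_transpose]
    set zx : V → ℝ := fun i => s i * Real.sqrt (x i) with hzx
    have hqx : (fun i => s i * x i) = Ex *ᵥ zx := by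
      funext i
      rw [hEx, Matrix.mulVec_diagonal, hzx]
      simp only
      rw [show Real.sqrt (x i) * (s i * Real.sqrt (x i))
          = s i * (Real.sqrt (x i) * Real.sqrt (x i)) by ring,
        Real.mul_self_sqrt (hx0 i)]
    have hExEx : Ex * Ex = Matrix.diagonal x := by
      rw [hEx, Matrix.diagonal_mul_diagonal,
        show (fun i => Real.sqrt (x i) * Real.sqrt (x i)) = x from
          funext fun i => Real.mul_self_sqrt (hx0 i)]
    have hMtM2 : (Ex * S)ᵀ * (Ex * S) = S * Matrix.diagonal x * S := by
      rw [Matrix.transpose_mul, hST, hExt]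
      calc (S * Ex) * (Ex * S) = S * ((Ex * Ex) * S) := by
            rw [Matrix.mul_assoc, Matrix.mul_assoc]
      _ = S * (Matrix.diagonal x * S) := by rw [hExEx]
      _ = S * Matrix.diagonal x * S := by rw [Matrix.mul_assoc]
    have hMMt2 : (Ex * S) * (Ex * S)ᵀ = Ex * B * Ex := by
      rw [Matrix.transpose_mul, hST, hExt]
      calc (Ex * S) * (S * Ex) = Ex * (S * (S * Ex)) := by rw [Matrix.mul_assoc]
      _ = Ex * ((S * S) * Ex) := by rw [Matrix.mul_assoc]
      _ = Ex * (B * Ex) := by rw [hSS]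
      _ = Ex * B * Ex := by rw [Matrix.mul_assoc]
    have hforms2 : ∀ z, z ⬝ᵥ ((Ex * B * Ex) *ᵥ z) ≤ z ⬝ᵥ z := by
      intro z
      have ht := transfer (Ex * S)ᵀ
        (fun z' => by rw [Matrix.transpose_transpose, hMtM2]; exact hformx z') z
      rwa [Matrix.transpose_transpose, hMMt2] at ht
    have h1 : (fun i => s i * x i) ⬝ᵥ (B *ᵥ (fun i => s i * x i))
        = zx ⬝ᵥ ((Ex * B * Ex) *ᵥ zx) := by
      rw [hqx]
      calc (Ex *ᵥ zx) ⬝ᵥ (B *ᵥ (Ex *ᵥ zx))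
          = zx ⬝ᵥ (Exᵀ *ᵥ (B *ᵥ (Ex *ᵥ zx))) := (dot_transpose Ex zx _).symm
        _ = zx ⬝ᵥ (Ex *ᵥ (B *ᵥ (Ex *ᵥ zx))) := by rw [hExt]
        _ = zx ⬝ᵥ ((Ex * B * Ex) *ᵥ zx) := by
            rw [Matrix.mulVec_mulVec, Matrix.mulVec_mulVec]
    have h2 : zx ⬝ᵥ zx = ip w x := by
      rw [ip, dotProduct]
      refine Finset.sum_congr rfl fun i _ => ?_
      rw [hzx]
      simp only
      rw [show s i * Real.sqrt (x i) * (s i * Real.sqrt (x i))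
          = (s i * s i) * (Real.sqrt (x i) * Real.sqrt (x i)) by ring,
        hws i, Real.mul_self_sqrt (hx0 i)]
    have h3 : (fun i => s i * x i) ⬝ᵥ (B *ᵥ (fun i => s i * x i)) ≤ ip w x := by
      rw [h1, ← h2]
      exact hforms2 zx
    rw [hobj x, ← hip x]
    linarith
  -- value of the maximum
  have hval : 2*(s ⬝ᵥ q₀) - q₀ ⬝ᵥ (B *ᵥ q₀) = ip w y₀ := by
    have h1 : q₀ ⬝ᵥ (B *ᵥ q₀) = s ⬝ᵥ q₀ := by
      rw [dotProduct, dotProduct]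
      refine Finset.sum_congr rfl fun i _ => ?_
      rcases eq_or_lt_of_le (hq₀0' i) with h | h
      · rw [← h]; ring
      · rw [hkkt i h]; ring
    have h2 : ip w y₀ = s ⬝ᵥ q₀ := by
      rw [ip, dotProduct]
      refine Finset.sum_congr rfl fun i _ => ?_
      rw [← hws i, mul_assoc, hsy i]
    rw [h1, h2]
    ring
  have hub : ∀ x : V → ℝ, 0 ≤ x → luzObj A w x ≤ ip w y₀ := by
    intro x hx
    rw [hobj x]
    have hq0' : (0 : V → ℝ) ≤ fun i => s i * x i := fun i => mul_nonneg (hs i) (hx i)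
    calc 2*(s ⬝ᵥ (fun i => s i * x i)) - (fun i => s i * x i) ⬝ᵥ (B *ᵥ (fun i => s i * x i))
        ≤ 2*(s ⬝ᵥ q₀) - q₀ ⬝ᵥ (B *ᵥ q₀) := hglob _ hq0'
    _ = ip w y₀ := hval
  -- sup gymnastics
  have hRne : {r : ℝ | ∃ x ∈ Uset A, r = ip w x}.Nonempty := ⟨ip w y₀, y₀, hy₀mem, rfl⟩
  have hRbdd : BddAbove {r : ℝ | ∃ x ∈ Uset A, r = ip w x} := by
    refine ⟨ip w y₀, ?_⟩
    rintro r ⟨x, hx, rfl⟩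
    exact (hlb x hx).trans (hub x hx.1)
  have hups_ge : ip w y₀ ≤ upsilon A w := le_csSup hRbdd ⟨y₀, hy₀mem, rfl⟩
  have hub2 : ∀ x : V → ℝ, 0 ≤ x → luzObj A w x ≤ upsilon A w :=
    fun x hx => (hub x hx).trans hups_ge
  have hle : luzE A w ≤ ((upsilon A w : ℝ) : EReal) := by
    unfold luzE
    apply sSup_le
    rintro r ⟨x, hx, rfl⟩
    exact_mod_cast hub2 x hx
  have hge0 : ((luzObj A w 0 : ℝ) : EReal) ≤ luzE A w :=
    le_sSup ⟨0, le_refl 0, rfl⟩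
  have hnetop : luzE A w ≠ ⊤ := by
    intro h
    rw [h] at hle
    exact absurd hle (by simp)
  have hnebot : luzE A w ≠ ⊥ := by
    intro h
    rw [h] at hge0
    exact absurd hge0 (by simp)
  obtain ⟨c, hc⟩ : ∃ c : ℝ, luzE A w = (c : EReal) :=
    ⟨(luzE A w).toReal, (EReal.coe_toReal hnetop hnebot).symm⟩
  have hge : ((upsilon A w : ℝ) : EReal) ≤ luzE A w := by
    rw [hc, EReal.coe_le_coe_iff]
    apply csSup_le hRne
    rintro r ⟨x, hx, rfl⟩
    have h1 : ip w x ≤ luzObj A w x := hlb x hx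
    have h2 : ((luzObj A w x : ℝ) : EReal) ≤ (c : EReal) := by
      rw [← hc]
      exact le_sSup ⟨x, hx.1, rfl⟩
    exact h1.trans (EReal.coe_le_coe_iff.mp h2)
  exact le_antisymm hle hge


end LuzAux
end
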